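/- arXiv:1908.10772 — 7 statements merged into one kernel-verified Lean document; each statement's English description precedes it below -/
import Mathlib

section
/- Let ℱ be a field with |ℱ| ≥ k. If α is an element of PGL(2, ℱ), then there is a unique projectivity α̃ in PGL(k, ℱ) such that ν(x^α) = ν(x)^{α̃} for all points x of PG(1, ℱ), where ν : PG(1, ℱ) → PG(k-1, ℱ) is the Veronese-type map (x₁, x₂) ↦ (x₁^{k-1}, x₁^{k-2}x₂, ..., x₂^{k-1}). -/
/-!
The lift is the `(k-1)`-st symmetric power of `α`: coordinate `i` of `ν(α v)` is
`ℓ₀(v)^(k-1-i) ℓ₁(v)^i`, where `ℓ₀, ℓ₁` are the coordinate forms of `α`, a binary form of degree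
`k-1` in `v` and hence a fixed linear combination of the coordinates of `ν(v)`.

For uniqueness, `β⁻¹ β'` maps every point `ν(v)` to a multiple of itself. For distinct
`t₁, …, t_k` the vectors `ν(1, tₛ)` are the rows of a Vandermonde matrix, hence a basis, and
`ν(0, 1)` has no zero coordinate in it: pairing with the coefficients of
`∏_{r ≠ s} (X - t_r)` kills every `ν(1, t_r)` with `r ≠ s` but not `ν(0, 1)`. So these `k + 1`
points form a frame, and a linear map fixing a frame projectively is a scalar.
-/

/-- The Veronese-type map `(x₁, x₂) ↦ (x₁^{k-1}, x₁^{k-2}x₂, …, x₂^{k-1})` on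
coordinate vectors. -/
def veroneseMap (F : Type*) [Field F] (k : ℕ) (v : Fin 2 → F) : Fin k → F :=
  fun i => v 0 ^ (k - 1 - (i : ℕ)) * v 1 ^ (i : ℕ)

open Polynomial Finset

namespace Polynomial

variable {R : Type*} [CommSemiring R]

theorem eval_homogenize_eq_sum (p : R[X]) (n : ℕ) (x : Fin 2 → R) :
    MvPolynomial.eval x (p.homogenize n) =
      ∑ i ∈ range (n + 1), p.coeff i * x 0 ^ i * x 1 ^ (n - i) := by
  simp only [homogenize, Finset.Nat.sum_antidiagonal_eq_sum_range_succ_mk, MvPolynomial.eval_sum]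
  refine Finset.sum_congr rfl fun i _ => ?_
  rw [MvPolynomial.eval_monomial, Finsupp.prod_fintype _ _ (by simp)]
  simp [Fin.prod_univ_two, mul_assoc]

theorem homogenize_pow {p : R[X]} {n : ℕ} (hp : p.natDegree ≤ n) (m : ℕ) :
    (p ^ m).homogenize (m * n) = p.homogenize n ^ m := by
  simpa using homogenize_finsetProd (s := range m) (p := fun _ => p) (n := fun _ => n)
    fun _ _ => hp

end Polynomial

theorem Module.Basis.eq_smul_id_of_apply_eq_smul {ι R M : Type*} [Fintype ι] [CommRing R]
    [IsDomain R] [AddCommGroup M] [Module R M] (b : Module.Basis ι R M) {f : M →ₗ[R] M}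
    {d : ι → R} (hd : ∀ i, f (b i) = d i • b i) {p : M} {e : R} (hp : f p = e • p)
    (hpb : ∀ i, b.repr p i ≠ 0) : f = e • LinearMap.id := by
  have hfp : f p = ∑ i, (b.repr p i * d i) • b i := by
    conv_lhs => rw [← b.sum_repr p, map_sum]
    simp only [map_smul, hd, smul_smul]
  have hde : ∀ i, d i = e := fun i => by
    have h := congr_arg (fun x => b.repr x i) hp
    simp only [hfp, b.repr_sum_self, map_smul, Finsupp.smul_apply, smul_eq_mul] at h
    exact mul_left_cancel₀ (hpb i) (h.trans (mul_comm _ _))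
  exact b.ext fun i => by simp [hd, hde]

section Veronese

variable {F : Type*} [Field F] {k : ℕ}

/-- `homogenize` puts the variable of the polynomial in `X 0`, whereas the index of
`veroneseMap` counts powers of `v 1`; hence the swap `![v 1, v 0]`. -/
theorem coeff_dotProduct_veroneseMap {n : ℕ} (hn : n + 1 = k) (p : F[X]) (v : Fin 2 → F) :
    (fun j : Fin k => p.coeff j) ⬝ᵥ veroneseMap F k v =
      MvPolynomial.eval ![v 1, v 0] (p.homogenize n) := by
  subst hn
  rw [eval_homogenize_eq_sum, dotProduct, ← Fin.sum_univ_eq_sum_range]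
  refine Finset.sum_congr rfl fun i _ => ?_
  simp only [veroneseMap, Matrix.cons_val_zero, Matrix.cons_val_one, add_tsub_cancel_right]
  ring

noncomputable def coordPoly (A : (Fin 2 → F) →ₗ[F] (Fin 2 → F)) (r : Fin 2) : F[X] :=
  C (A (Pi.single 1 1) r) * X + C (A (Pi.single 0 1) r)

theorem natDegree_coordPoly_le (A : (Fin 2 → F) →ₗ[F] (Fin 2 → F)) (r : Fin 2) :
    (coordPoly A r).natDegree ≤ 1 := by
  unfold coordPoly; compute_degree

theorem eval_homogenize_coordPoly (A : (Fin 2 → F) →ₗ[F] (Fin 2 → F)) (r : Fin 2)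
    (v : Fin 2 → F) :
    MvPolynomial.eval ![v 1, v 0] ((coordPoly A r).homogenize 1) = A v r := by
  conv_rhs => rw [pi_eq_sum_univ' v]
  simp [coordPoly, Fin.sum_univ_two, homogenize_C_mul]
  ring

/-- Row `i` holds the coefficients of `coordPoly A 0 ^ (k-1-i) * coordPoly A 1 ^ i`, the
dehomogenized form `ℓ₀^(k-1-i) ℓ₁^i`. -/
noncomputable def veroneseLift (k : ℕ) (A : (Fin 2 → F) →ₗ[F] (Fin 2 → F)) :
    (Fin k → F) →ₗ[F] (Fin k → F) :=
  Matrix.toLin' (Matrix.of fun i j : Fin k =>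
    (coordPoly A 0 ^ (k - 1 - i) * coordPoly A 1 ^ (i : ℕ)).coeff j)

theorem veroneseLift_apply_veroneseMap (A : (Fin 2 → F) →ₗ[F] (Fin 2 → F)) (v : Fin 2 → F) :
    veroneseLift k A (veroneseMap F k v) = veroneseMap F k (A v) := by
  funext i
  change (fun j : Fin k => (coordPoly A 0 ^ (k - 1 - i) * coordPoly A 1 ^ (i : ℕ)).coeff j)
    ⬝ᵥ veroneseMap F k v = _
  rw [coeff_dotProduct_veroneseMap (n := (k - 1 - i) * 1 + i * 1) (by omega),
    homogenize_mul _ _ (natDegree_pow_le_of_le _ (natDegree_coordPoly_le A 0))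
      (natDegree_pow_le_of_le _ (natDegree_coordPoly_le A 1)),
    homogenize_pow (natDegree_coordPoly_le A 0), homogenize_pow (natDegree_coordPoly_le A 1)]
  simp [eval_homogenize_coordPoly, veroneseMap]

theorem linearIndependent_veroneseMap (t : Fin k ↪ F) :
    LinearIndependent F fun s => veroneseMap F k ![1, t s] := by
  have h : (fun s => veroneseMap F k ![1, t s]) = fun s => Matrix.vandermonde t s := by
    ext s i; simp [veroneseMap, Matrix.vandermonde]
  rw [h]
  exact Matrix.linearIndependent_rows_iff_isUnit.2 <| (Matrix.isUnit_iff_isUnit_det _).2 <|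
    isUnit_iff_ne_zero.2 <| Matrix.det_vandermonde_ne_zero_iff.2 t.injective

noncomputable def veroneseBasis (t : Fin k ↪ F) : Module.Basis (Fin k) F (Fin k → F) :=
  basisOfLinearIndependentOfCardEqFinrank' _ (linearIndependent_veroneseMap t) (by simp)

theorem coe_veroneseBasis (t : Fin k ↪ F) :
    ⇑(veroneseBasis t) = fun s => veroneseMap F k ![1, t s] :=
  coe_basisOfLinearIndependentOfCardEqFinrank' ..

theorem veroneseBasis_repr_ne_zero (t : Fin k ↪ F) (s : Fin k) :
    (veroneseBasis t).repr (veroneseMap F k ![0, 1]) s ≠ 0 := by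
  have hk : k - 1 + 1 = k := by have := s.isLt; omega
  set f := Lagrange.nodal (univ.erase s) t
  have hdeg : f.natDegree = k - 1 := by simp [f, Lagrange.natDegree_nodal, card_erase_of_mem]
  have h_inf : (fun j : Fin k => f.coeff j) ⬝ᵥ veroneseMap F k ![0, 1] = 1 := by
    rw [coeff_dotProduct_veroneseMap hk, eval_homogenize_eq_sum, sum_eq_single (k - 1)]
    · simpa [hdeg] using (Lagrange.nodal_monic (s := univ.erase s) (v := t)).coeff_natDegree
    · intro j hj hne
      simp [zero_pow (show k - 1 - j ≠ 0 by simp at hj; omega)]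
    · simp
  have h_fin (r : Fin k) :
      (fun j : Fin k => f.coeff j) ⬝ᵥ veroneseMap F k ![1, t r] = f.eval (t r) := by
    rw [coeff_dotProduct_veroneseMap hk, eval_homogenize hdeg.le _ one_ne_zero]
    simp
  intro h0
  have h_pair := congr_arg ((fun j : Fin k => f.coeff j) ⬝ᵥ ·)
    ((veroneseBasis t).sum_repr (veroneseMap F k ![0, 1]))
  simp only [dotProduct_sum, dotProduct_smul, coe_veroneseBasis, h_fin, h_inf] at h_pair
  refine one_ne_zero (h_pair.symm.trans (sum_eq_zero fun r _ => ?_))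
  rcases eq_or_ne r s with rfl | hr
  · simp [h0]
  · simp [f, Lagrange.eval_nodal_at_node (mem_erase.2 ⟨hr, mem_univ r⟩)]

theorem ext_veroneseMap {M : Type*} [AddCommMonoid M] [Module F M] [Fintype F]
    (hcard : k ≤ Fintype.card F) {f g : (Fin k → F) →ₗ[F] M}
    (h : ∀ v, f (veroneseMap F k v) = g (veroneseMap F k v)) : f = g := by
  obtain ⟨t⟩ : Nonempty (Fin k ↪ F) := Function.Embedding.nonempty_of_card_le (by simpa using hcard)
  exact (veroneseBasis t).ext fun s => by simp [coe_veroneseBasis, h]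

noncomputable def veroneseLiftEquiv [Fintype F] (hcard : k ≤ Fintype.card F)
    (α : (Fin 2 → F) ≃ₗ[F] (Fin 2 → F)) : (Fin k → F) ≃ₗ[F] (Fin k → F) :=
  .ofLinearMap (veroneseLift k α) (veroneseLift k α.symm)
    (ext_veroneseMap hcard fun v => by simp [veroneseLift_apply_veroneseMap])
    (ext_veroneseMap hcard fun v => by simp [veroneseLift_apply_veroneseMap])

variable (k) in
def IsVeroneseLift (α : (Fin 2 → F) ≃ₗ[F] (Fin 2 → F)) (β : (Fin k → F) ≃ₗ[F] (Fin k → F)) :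
    Prop :=
  ∀ v : Fin 2 → F, v ≠ 0 → ∃ c : F, c ≠ 0 ∧ β (veroneseMap F k v) = c • veroneseMap F k (α v)

theorem isVeroneseLift_veroneseLiftEquiv [Fintype F] (hcard : k ≤ Fintype.card F)
    (α : (Fin 2 → F) ≃ₗ[F] (Fin 2 → F)) : IsVeroneseLift k α (veroneseLiftEquiv hcard α) :=
  fun v _ => ⟨1, one_ne_zero, by simp [veroneseLiftEquiv, veroneseLift_apply_veroneseMap]⟩

namespace IsVeroneseLift

variable {α : (Fin 2 → F) ≃ₗ[F] (Fin 2 → F)} {β β' : (Fin k → F) ≃ₗ[F] (Fin k → F)}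

theorem exists_symm_trans_apply_eq_smul (h : IsVeroneseLift k α β) (h' : IsVeroneseLift k α β')
    {w : Fin 2 → F} (hw : w ≠ 0) :
    ∃ c : F, c ≠ 0 ∧ β' (β.symm (veroneseMap F k w)) = c • veroneseMap F k w := by
  obtain ⟨c, hc, hβ⟩ := h (α.symm w) (by simpa using hw)
  obtain ⟨c', hc', hβ'⟩ := h' (α.symm w) (by simpa using hw)
  rw [α.apply_symm_apply] at hβ hβ'
  have hsymm : β.symm (veroneseMap F k w) = c⁻¹ • veroneseMap F k (α.symm w) := by
    rw [β.symm_apply_eq, map_smul, hβ, smul_smul, inv_mul_cancel₀ hc, one_smul]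
  exact ⟨c⁻¹ * c', mul_ne_zero (inv_ne_zero hc) hc', by rw [hsymm, map_smul, hβ', smul_smul]⟩

theorem unique [Fintype F] (hcard : k ≤ Fintype.card F) (h : IsVeroneseLift k α β)
    (h' : IsVeroneseLift k α β') : ∃ c : F, c ≠ 0 ∧ ∀ w, β' w = c • β w := by
  obtain ⟨t⟩ : Nonempty (Fin k ↪ F) := Function.Embedding.nonempty_of_card_le (by simpa using hcard)
  choose d _ hd using fun s => h.exists_symm_trans_apply_eq_smul h' (w := ![1, t s])
    fun h0 => one_ne_zero (congr_fun h0 0)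
  obtain ⟨e, he, hp⟩ := h.exists_symm_trans_apply_eq_smul h' (w := ![0, 1])
    fun h0 => one_ne_zero (congr_fun h0 1)
  have hγ := (veroneseBasis t).eq_smul_id_of_apply_eq_smul (f := (β.symm.trans β').toLinearMap)
    (by simpa [coe_veroneseBasis] using hd) hp (veroneseBasis_repr_ne_zero t)
  exact ⟨e, he, fun w => by simpa using LinearMap.congr_fun hγ (β w)⟩

end IsVeroneseLift

end Veronese

theorem veronese_lift_exists_unique_general {F : Type*} [Field F] [Fintype F] (k : ℕ)
    (hcard : k ≤ Fintype.card F)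
    (α : (Fin 2 → F) ≃ₗ[F] (Fin 2 → F)) :
    (∃ β : (Fin k → F) ≃ₗ[F] (Fin k → F),
      ∀ v : Fin 2 → F, v ≠ 0 →
        ∃ c : F, c ≠ 0 ∧ β (veroneseMap F k v) = c • veroneseMap F k (α v)) ∧
    (∀ β β' : (Fin k → F) ≃ₗ[F] (Fin k → F),
      (∀ v : Fin 2 → F, v ≠ 0 →
        ∃ c : F, c ≠ 0 ∧ β (veroneseMap F k v) = c • veroneseMap F k (α v)) →
      (∀ v : Fin 2 → F, v ≠ 0 →
        ∃ c : F, c ≠ 0 ∧ β' (veroneseMap F k v) = c • veroneseMap F k (α v)) →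
      ∃ c : F, c ≠ 0 ∧ ∀ w, β' w = c • β w) :=
  ⟨⟨_, isVeroneseLift_veroneseLiftEquiv hcard α⟩, fun _ _ h h' => IsVeroneseLift.unique hcard h h'⟩

/-- For `|F| ≥ k`, every projectivity `α` of `PG(1, F)` lifts to a unique
projectivity `α̃` of `PG(k-1, F)` with `ν(x^α) = ν(x)^{α̃}`.  Projectivities are
represented by invertible linear maps, and equality of the induced projectivities
amounts to equality up to a nonzero scalar. -/
theorem veronese_lift_exists_unique {F : Type*} [Field F] [Fintype F] (k : ℕ) (hk : 2 ≤ k)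
    (hcard : k ≤ Fintype.card F)
    (α : (Fin 2 → F) ≃ₗ[F] (Fin 2 → F)) :
    (∃ β : (Fin k → F) ≃ₗ[F] (Fin k → F),
      ∀ v : Fin 2 → F, v ≠ 0 →
        ∃ c : F, c ≠ 0 ∧ β (veroneseMap F k v) = c • veroneseMap F k (α v)) ∧
    (∀ β β' : (Fin k → F) ≃ₗ[F] (Fin k → F),
      (∀ v : Fin 2 → F, v ≠ 0 →
        ∃ c : F, c ≠ 0 ∧ β (veroneseMap F k v) = c • veroneseMap F k (α v)) →
      (∀ v : Fin 2 → F, v ≠ 0 →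
        ∃ c : F, c ≠ 0 ∧ β' (veroneseMap F k v) = c • veroneseMap F k (α v)) →
      ∃ c : F, c ≠ 0 ∧ ∀ w, β' w = c • β w) :=
  veronese_lift_exists_unique_general k hcard α
end

section
/- Let q = 2^h and let σ : x ↦ x^{2^e} be a field automorphism of F_q with gcd(e, h) = 1. Then the set {(1, t, t^σ) : t ∈ F_q} ∪ {(0,0,1), (0,1,0)} is an arc of size q+2 in PG(2, q), i.e., no three of these points are collinear. -/
/-!
Three vectors of `F³` are linearly dependent iff some nonzero `x` is orthogonal to all of them,
i.e. they lie on a common line, so it suffices that every line meets the set in at most two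
points. A line `x₀ + x₁ X + x₂ Y = 0` with `x₂ ≠ 0` meets the affine part in the roots of
`x₀ + t x₁ + σ(t) x₂`; for differences `d, d'` of such roots, `σ(d / d') = d / d'`. A fixed
point of `σ` is a periodic point of squaring of periods `e` and `h`, hence of period
`gcd(e, h) = 1`, so it is `0` or `1`; therefore there are at most two roots. Lines with `x₁ = 0` or `x₂ = 0` pass through the points at infinity but meet the affine
part at most once.
-/

open Matrix Function

theorem pow_pow_gcd_eq_self {M : Type*} [Monoid M] {x : M} {p m n : ℕ}
    (hm : x ^ p ^ m = x) (hn : x ^ p ^ n = x) : x ^ p ^ m.gcd n = x := by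
  have hper (k : ℕ) : IsPeriodicPt (· ^ p) k x ↔ x ^ p ^ k = x := by
    rw [IsPeriodicPt, IsFixedPt, pow_iterate]
  exact (hper _).mp (((hper m).mpr hm).gcd ((hper n).mpr hn))

theorem FiniteField.eq_zero_or_one_of_pow_two_pow_eq_self {F : Type*} [Field F] [Fintype F]
    {h e : ℕ} (hcard : Fintype.card F = 2 ^ h) (hgcd : e.gcd h = 1) {x : F}
    (hx : x ^ 2 ^ e = x) : x = 0 ∨ x = 1 := by
  have hsq := pow_pow_gcd_eq_self hx (hcard ▸ FiniteField.pow_card x)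
  rw [hgcd, pow_one, sq] at hsq
  exact IsIdempotentElem.iff_eq_zero_or_one.mp hsq

section LinearAlgebra

variable {F : Type*} [Field F]

theorem exists_dotProduct_eq_zero_of_not_linearIndependent {u v w : Fin 3 → F}
    (h : ¬LinearIndependent F ![u, v, w]) :
    ∃ x ≠ 0, u ⬝ᵥ x = 0 ∧ v ⬝ᵥ x = 0 ∧ w ⬝ᵥ x = 0 := by
  have hdet : (of ![u, v, w]).det = 0 := by
    rwa [← not_ne_iff, ← isUnit_iff_ne_zero, ← isUnit_iff_isUnit_det,
      ← linearIndependent_rows_iff_isUnit]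
  obtain ⟨x, hx, hux⟩ := exists_mulVec_eq_zero_iff.mpr hdet
  exact ⟨x, hx, congr_fun hux 0, congr_fun hux 1, congr_fun hux 2⟩

theorem linearIndependent_of_forall_ncard_sep_le_two {S : Set (Fin 3 → F)} (hS : S.Finite)
    (hline : ∀ x ≠ 0, {v ∈ S | v ⬝ᵥ x = 0}.ncard ≤ 2) {u v w : Fin 3 → F}
    (hu : u ∈ S) (hv : v ∈ S) (hw : w ∈ S) (huv : u ≠ v) (huw : u ≠ w) (hvw : v ≠ w) :
    LinearIndependent F ![u, v, w] := by
  by_contra h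
  obtain ⟨x, hx, hux, hvx, hwx⟩ := exists_dotProduct_eq_zero_of_not_linearIndependent h
  refine (hline x hx).not_gt ((Set.two_lt_ncard_iff (hS.sep _)).mpr ?_)
  exact ⟨u, v, w, ⟨hu, hux⟩, ⟨hv, hvx⟩, ⟨hw, hwx⟩, huv, huw, hvw⟩

end LinearAlgebra

section HyperovalSet

variable {F : Type*} [Field F]

def hyperovalSet (f : F → F) : Set (Fin 3 → F) :=
  {v | ∃ t, v = ![1, t, f t]} ∪ {![0, 0, 1], ![0, 1, 0]}

theorem ncard_hyperovalSet [Fintype F] (f : F → F) :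
    (hyperovalSet f).ncard = Fintype.card F + 2 := by
  have hrange : {v | ∃ t, v = ![1, t, f t]} = Set.range fun t => ![1, t, f t] := by
    ext v; simp [eq_comm]
  have hinj : Injective fun t => ![1, t, f t] := fun s t hst => by simpa using congr_fun hst 1
  have hdisj : Disjoint (Set.range fun t => ![1, t, f t]) {![0, 0, 1], ![0, 1, 0]} := by
    refine Set.disjoint_left.mpr ?_
    rintro _ ⟨t, rfl⟩ h
    rcases h with h | h <;> simpa using congr_fun h 0
  have hpair : ({![0, 0, 1], ![0, 1, 0]} : Set (Fin 3 → F)).ncard = 2 :=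
    Set.ncard_pair (by simp [funext_iff, Fin.forall_fin_succ])
  rw [hyperovalSet, hrange, Set.ncard_union_eq hdisj, Set.ncard_range_of_injective hinj, hpair,
    Nat.card_eq_fintype_card]

theorem mem_hyperovalSet_of_dotProduct_eq_zero {f : F → F} {v x : Fin 3 → F}
    (hv : v ∈ hyperovalSet f) (hvx : v ⬝ᵥ x = 0) :
    v ∈ (fun t => ![1, t, f t]) '' {t | ![1, t, f t] ⬝ᵥ x = 0} ∨
      (v = ![0, 0, 1] ∧ x 2 = 0) ∨ (v = ![0, 1, 0] ∧ x 1 = 0) := by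
  rcases hv with ⟨t, rfl⟩ | rfl | rfl
  · exact Or.inl ⟨t, hvx, rfl⟩
  · exact Or.inr (Or.inl ⟨rfl, by rw [vec3_dotProduct] at hvx; simpa using hvx⟩)
  · exact Or.inr (Or.inr ⟨rfl, by rw [vec3_dotProduct] at hvx; simpa using hvx⟩)

end HyperovalSet

section Hyperoval

variable {F : Type*} [Field F] (σ : F →+* F)

theorem dotProduct_vec3_one (t : F) (x : Fin 3 → F) :
    ![1, t, σ t] ⬝ᵥ x = x 0 + t * x 1 + σ t * x 2 := by
  rw [vec3_dotProduct]
  simp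

variable {σ} {x : Fin 3 → F}

theorem eq_of_dotProduct_vec3_eq_zero (hσ : ∀ y, σ y = y → y = 0 ∨ y = 1) (hx : x 2 ≠ 0)
    {t₁ t₂ t₃ : F} (h₁ : ![1, t₁, σ t₁] ⬝ᵥ x = 0) (h₂ : ![1, t₂, σ t₂] ⬝ᵥ x = 0)
    (h₃ : ![1, t₃, σ t₃] ⬝ᵥ x = 0) (h₁₂ : t₁ ≠ t₂) (h₁₃ : t₁ ≠ t₃) : t₂ = t₃ := by
  rw [dotProduct_vec3_one] at h₁ h₂ h₃
  have hd₂ : t₂ - t₁ ≠ 0 := sub_ne_zero.mpr h₁₂.symm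
  have hd₃ : t₃ - t₁ ≠ 0 := sub_ne_zero.mpr h₁₃.symm
  have hcross : σ (t₂ - t₁) * (t₃ - t₁) = (t₂ - t₁) * σ (t₃ - t₁) := by
    refine mul_left_cancel₀ hx ?_
    rw [map_sub, map_sub]
    linear_combination (t₃ - t₁) * (h₂ - h₁) - (t₂ - t₁) * (h₃ - h₁)
  have hfix : σ ((t₂ - t₁) / (t₃ - t₁)) = (t₂ - t₁) / (t₃ - t₁) := by
    rw [map_div₀, div_eq_div_iff ((map_ne_zero σ).mpr hd₃) hd₃, hcross]
  rcases hσ _ hfix with h | h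
  · exact absurd h (div_ne_zero hd₂ hd₃)
  · simpa using (div_eq_one_iff_eq hd₃).mp h

theorem ncard_setOf_dotProduct_vec3_eq_zero_le_two [Finite F]
    (hσ : ∀ y, σ y = y → y = 0 ∨ y = 1) (hx : x 2 ≠ 0) :
    {t | ![1, t, σ t] ⬝ᵥ x = 0}.ncard ≤ 2 := by
  by_contra! h
  obtain ⟨t₁, t₂, t₃, h₁, h₂, h₃, h₁₂, h₁₃, h₂₃⟩ := (Set.two_lt_ncard_iff).mp h
  exact h₂₃ (eq_of_dotProduct_vec3_eq_zero hσ hx h₁ h₂ h₃ h₁₂ h₁₃)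

theorem subsingleton_setOf_dotProduct_vec3_eq_zero_of_left (hb : x 1 = 0) (hc : x 2 ≠ 0) :
    {t | ![1, t, σ t] ⬝ᵥ x = 0}.Subsingleton := by
  intro s (hs : _ = _) t (ht : _ = _)
  rw [dotProduct_vec3_one, hb] at hs ht
  exact σ.injective (mul_right_cancel₀ hc (by linear_combination hs - ht))

theorem subsingleton_setOf_dotProduct_vec3_eq_zero_of_right (hb : x 1 ≠ 0) (hc : x 2 = 0) :
    {t | ![1, t, σ t] ⬝ᵥ x = 0}.Subsingleton := by
  intro s (hs : _ = _) t (ht : _ = _)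
  rw [dotProduct_vec3_one, hc] at hs ht
  exact mul_right_cancel₀ hb (by linear_combination hs - ht)

theorem ncard_sep_hyperovalSet_dotProduct_eq_zero_le_two [Finite F]
    (hσ : ∀ y, σ y = y → y = 0 ∨ y = 1) (hx : x ≠ 0) :
    {v ∈ hyperovalSet σ | v ⬝ᵥ x = 0}.ncard ≤ 2 := by
  set P : F → Fin 3 → F := fun t => ![1, t, σ t]
  set R := {t | P t ⬝ᵥ x = 0}
  have hmem (v) (hv : v ∈ {v ∈ hyperovalSet σ | v ⬝ᵥ x = 0}) :
      v ∈ P '' R ∨ (v = ![0, 0, 1] ∧ x 2 = 0) ∨ (v = ![0, 1, 0] ∧ x 1 = 0) :=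
    mem_hyperovalSet_of_dotProduct_eq_zero hv.1 hv.2
  rcases eq_or_ne (x 1) 0 with hb | hb <;> rcases eq_or_ne (x 2) 0 with hc | hc
  · have ha : x 0 ≠ 0 := fun ha => hx (by ext i; fin_cases i <;> assumption)
    calc _ ≤ ({![0, 0, 1], ![0, 1, 0]} : Set (Fin 3 → F)).ncard := by
          refine Set.ncard_le_ncard fun v hv => ?_
          rcases hmem v hv with ⟨t, ht, -⟩ | ⟨rfl, -⟩ | ⟨rfl, -⟩
          · have : x 0 + t * x 1 + σ t * x 2 = 0 := (dotProduct_vec3_one σ t x).symm.trans ht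
            simp [hb, hc, ha] at this
          · exact Or.inl rfl
          · exact Or.inr rfl
      _ ≤ 2 := (Set.ncard_insert_le _ _).trans (by simp)
  · calc _ ≤ (insert ![0, 1, 0] (P '' R)).ncard := by
          refine Set.ncard_le_ncard fun v hv => ?_
          rcases hmem v hv with h | ⟨-, h⟩ | ⟨rfl, -⟩
          exacts [Or.inr h, absurd h hc, Or.inl rfl]
      _ ≤ R.ncard + 1 := (Set.ncard_insert_le _ _).trans (by grw [Set.ncard_image_le])
      _ ≤ 1 + 1 := Nat.add_le_add_right (Set.ncard_le_one_iff_subsingleton.mpr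
          (subsingleton_setOf_dotProduct_vec3_eq_zero_of_left hb hc)) 1
  · calc _ ≤ (insert ![0, 0, 1] (P '' R)).ncard := by
          refine Set.ncard_le_ncard fun v hv => ?_
          rcases hmem v hv with h | ⟨rfl, -⟩ | ⟨-, h⟩
          exacts [Or.inr h, Or.inl rfl, absurd h hb]
      _ ≤ R.ncard + 1 := (Set.ncard_insert_le _ _).trans (by grw [Set.ncard_image_le])
      _ ≤ 1 + 1 := Nat.add_le_add_right (Set.ncard_le_one_iff_subsingleton.mpr
          (subsingleton_setOf_dotProduct_vec3_eq_zero_of_right hb hc)) 1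
  · calc _ ≤ (P '' R).ncard := by
          refine Set.ncard_le_ncard fun v hv => ?_
          rcases hmem v hv with h | ⟨-, h⟩ | ⟨-, h⟩
          exacts [h, absurd h hc, absurd h hb]
      _ ≤ R.ncard := Set.ncard_image_le
      _ ≤ 2 := ncard_setOf_dotProduct_vec3_eq_zero_le_two hσ hc

theorem linearIndependent_of_mem_hyperovalSet [Finite F] (hσ : ∀ y, σ y = y → y = 0 ∨ y = 1)
    {u v w : Fin 3 → F} (hu : u ∈ hyperovalSet σ) (hv : v ∈ hyperovalSet σ)
    (hw : w ∈ hyperovalSet σ) (huv : u ≠ v) (huw : u ≠ w) (hvw : v ≠ w) :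
    LinearIndependent F ![u, v, w] :=
  linearIndependent_of_forall_ncard_sep_le_two (Set.toFinite _)
    (fun _ hx => ncard_sep_hyperovalSet_dotProduct_eq_zero_le_two hσ hx) hu hv hw huv huw hvw

end Hyperoval

theorem translation_hyperoval_is_arc_general {F : Type*} [Field F] [Fintype F] (h e : ℕ)
    (hcard : Fintype.card F = 2 ^ h) (hgcd : Nat.gcd e h = 1)
    (S : Set (Fin 3 → F))
    (hS : S = {v | ∃ t : F, v = ![1, t, t ^ 2 ^ e]} ∪ {![0, 0, 1], ![0, 1, 0]}) :
    S.ncard = 2 ^ h + 2 ∧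
      ∀ u ∈ S, ∀ v ∈ S, ∀ w ∈ S, u ≠ v → u ≠ w → v ≠ w →
        LinearIndependent F ![u, v, w] := by
  have : CharP F 2 := charP_of_card_eq_prime_pow hcard
  have hfix (y : F) (hy : iterateFrobenius F 2 e y = y) : y = 0 ∨ y = 1 :=
    FiniteField.eq_zero_or_one_of_pow_two_pow_eq_self hcard hgcd hy
  obtain rfl : S = hyperovalSet (iterateFrobenius F 2 e) := hS
  exact ⟨by rw [ncard_hyperovalSet, hcard], fun u hu v hv w hw =>
    linearIndependent_of_mem_hyperovalSet hfix hu hv hw⟩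

/-- for `q = 2^h` and `σ : x ↦ x^{2^e}` with `gcd(e, h) = 1`, the set
`{(1, t, t^σ)} ∪ {(0,0,1), (0,1,0)}` is an arc of size `q+2` in `PG(2, q)`:
no three of its points are collinear. -/
theorem translation_hyperoval_is_arc {F : Type*} [Field F] [Fintype F] (h e : ℕ)
    (hh : 0 < h) (hcard : Fintype.card F = 2 ^ h) (hgcd : Nat.gcd e h = 1)
    (S : Set (Fin 3 → F))
    (hS : S = {v | ∃ t : F, v = ![1, t, t ^ 2 ^ e]} ∪ {![0, 0, 1], ![0, 1, 0]}) :
    S.ncard = 2 ^ h + 2 ∧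
      ∀ u ∈ S, ∀ v ∈ S, ∀ w ∈ S, u ≠ v → u ≠ w → v ≠ w →
        LinearIndependent F ![u, v, w] :=
  translation_hyperoval_is_arc_general h e hcard hgcd S hS
end

section
/- Let q = 2^h and let σ : x ↦ x^{2^e} with gcd(e, h) = 1. Then the set {(1, t, t^σ, t^{σ+1}) : t ∈ F_q} ∪ {(0,0,0,1)} is an arc of size q+1 in PG(3, q), i.e., any 4 of these points are linearly independent. -/
namespace SegreArcAux

set_option maxHeartbeats 1000000 in
lemma det_four {F : Type*} [CommRing F] (m : Matrix (Fin 4) (Fin 4) F) :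
    m.det = m 0 0 * (m 1 1 * (m 2 2 * m 3 3 - m 2 3 * m 3 2) - m 1 2 * (m 2 1 * m 3 3 - m 2 3 * m 3 1) + m 1 3 * (m 2 1 * m 3 2 - m 2 2 * m 3 1))
      - m 0 1 * (m 1 0 * (m 2 2 * m 3 3 - m 2 3 * m 3 2) - m 1 2 * (m 2 0 * m 3 3 - m 2 3 * m 3 0) + m 1 3 * (m 2 0 * m 3 2 - m 2 2 * m 3 0))
      + m 0 2 * (m 1 0 * (m 2 1 * m 3 3 - m 2 3 * m 3 1) - m 1 1 * (m 2 0 * m 3 3 - m 2 3 * m 3 0) + m 1 3 * (m 2 0 * m 3 1 - m 2 1 * m 3 0))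
      - m 0 3 * (m 1 0 * (m 2 1 * m 3 2 - m 2 2 * m 3 1) - m 1 1 * (m 2 0 * m 3 2 - m 2 2 * m 3 0) + m 1 2 * (m 2 0 * m 3 1 - m 2 1 * m 3 0)) := by
  rw [Matrix.det_succ_row_zero]
  simp [Fin.sum_univ_succ, Matrix.det_fin_three, Fin.succAbove,
    show (Fin.succ 2 : Fin 4) = 3 from rfl, show (Fin.castSucc 2 : Fin 4) = 2 from rfl,
    show ((1 : Fin 4) < 3) = True by simp, show (Fin.castSucc 1 : Fin 4) = 1 from rfl]
  ring

variable {F : Type*} [Field F]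

lemma frob_inj [CharP F 2] (k : ℕ) {x y : F} (hxy : x ^ 2 ^ k = y ^ 2 ^ k) : x = y := by
  have h2 : (x - y) ^ 2 ^ k = 0 := by
    rw [sub_pow_char_pow, hxy, sub_self]
  exact sub_eq_zero.mp (pow_eq_zero_iff (by positivity : (0:ℕ) < 2 ^ k).ne' |>.mp h2)

lemma frob_fix_mul [CharP F 2] (r : F) (m : ℕ) (hm : r ^ 2 ^ m = r) :
    ∀ k : ℕ, r ^ 2 ^ (k * m) = r := by
  intro k
  induction k with
  | zero => simp
  | succ k ih =>
    have : (k + 1) * m = k * m + m := by ring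
    rw [this, pow_add, pow_mul, ih, hm]

lemma frob_fix_gcd [CharP F 2] (r : F) :
    ∀ m n : ℕ, r ^ 2 ^ m = r → r ^ 2 ^ n = r → r ^ 2 ^ Nat.gcd m n = r := by
  intro m n
  induction m, n using Nat.gcd.induction with
  | H0 n => intro _ h2; simpa using h2
  | H1 m n hm ih =>
    intro h1 h2
    rw [Nat.gcd_rec]
    apply ih _ h1
    -- show r ^ 2 ^ (n % m) = r
    have hK : r ^ 2 ^ (n / m * m) = r := frob_fix_mul r m h1 (n / m)
    have hcomp : (r ^ 2 ^ (n % m)) ^ 2 ^ (n / m * m) = r ^ 2 ^ (n / m * m) := by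
      rw [← pow_mul, ← pow_add, Nat.mod_add_div' n m, h2]
      exact hK.symm
    exact frob_inj _ hcomp

lemma key_inj [Fintype F] [CharP F 2] (h e : ℕ) (hh : 0 < h)
    (hcard : Fintype.card F = 2 ^ h) (hgcd : Nat.gcd e h = 1)
    {s t : F} (hs : s ≠ 0) (ht : t ≠ 0)
    (heq : s * t ^ 2 ^ e = t * s ^ 2 ^ e) : s = t := by
  have hr0 : s * t⁻¹ ≠ 0 := mul_ne_zero hs (inv_ne_zero ht)
  have hfe : (s * t⁻¹) ^ 2 ^ e = s * t⁻¹ := by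
    rw [mul_pow, inv_pow]
    field_simp
    linear_combination -heq
  have hfh : (s * t⁻¹) ^ 2 ^ h = s * t⁻¹ := by
    rw [← hcard]; exact FiniteField.pow_card _
  have hfix := frob_fix_gcd (s * t⁻¹) e h hfe hfh
  rw [hgcd, show (2:ℕ) ^ 1 = 2 from rfl, sq] at hfix
  have h1 : (s * t⁻¹) * (s * t⁻¹) = 1 * (s * t⁻¹) := by rw [one_mul]; exact hfix
  have hr1 := mul_right_cancel₀ hr0 h1
  exact (mul_inv_eq_one₀ ht).mp hr1


lemma caseA [Fintype F] [CharP F 2] (h e : ℕ) (hh : 0 < h)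
    (hcard : Fintype.card F = 2 ^ h) (hgcd : Nat.gcd e h = 1)
    {a b c : F} (hab : a ≠ b) (hac : a ≠ c) (hbc : b ≠ c) :
    LinearIndependent F
      ![![(0:F),0,0,1], ![1, a, a ^ 2 ^ e, a ^ 2 ^ e * a],
        ![1, b, b ^ 2 ^ e, b ^ 2 ^ e * b], ![1, c, c ^ 2 ^ e, c ^ 2 ^ e * c]] := by
  have hU : IsUnit (Matrix.of ![![(0:F),0,0,1], ![1, a, a ^ 2 ^ e, a ^ 2 ^ e * a],
      ![1, b, b ^ 2 ^ e, b ^ 2 ^ e * b], ![1, c, c ^ 2 ^ e, c ^ 2 ^ e * c]]) := by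
    rw [Matrix.isUnit_iff_isUnit_det, isUnit_iff_ne_zero, det_four]
    simp only [Matrix.of_apply, Matrix.cons_val', Matrix.cons_val_zero, Matrix.cons_val_one,
      Matrix.head_cons, Matrix.empty_val', Matrix.cons_val_fin_one, Matrix.cons_val_two,
      Matrix.tail_cons, Matrix.cons_val_three, Matrix.head_fin_const]
    intro h0
    have h2 : (2:F) = 0 := by exact_mod_cast CharP.cast_eq_zero F 2
    have hex1 : (a + c) ^ 2 ^ e = a ^ 2 ^ e + c ^ 2 ^ e := add_pow_char_pow a c 2 e
    have hex2 : (a + b) ^ 2 ^ e = a ^ 2 ^ e + b ^ 2 ^ e := add_pow_char_pow a b 2 e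
    have hst : (a + b) * (a + c) ^ 2 ^ e = (a + c) * (a + b) ^ 2 ^ e := by
      rw [hex1, hex2]
      linear_combination h0 + (b * c ^ 2 ^ e - c * b ^ 2 ^ e) * h2
    have hsz : a + b ≠ 0 := fun hz => hab (by linear_combination hz - b * h2)
    have htz : a + c ≠ 0 := fun hz => hac (by linear_combination hz - c * h2)
    have := key_inj h e hh hcard hgcd hsz htz hst
    exact hbc (by linear_combination this)
  exact Matrix.linearIndependent_rows_iff_isUnit.mpr hU

lemma caseB [Fintype F] [CharP F 2] (h e : ℕ) (hh : 0 < h)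
    (hcard : Fintype.card F = 2 ^ h) (hgcd : Nat.gcd e h = 1)
    {a b c d : F} (hab : a ≠ b) (hac : a ≠ c) (had : a ≠ d) (hbc : b ≠ c)
    (hbd : b ≠ d) (hcd : c ≠ d) :
    LinearIndependent F
      ![![1, a, a ^ 2 ^ e, a ^ 2 ^ e * a], ![1, b, b ^ 2 ^ e, b ^ 2 ^ e * b],
        ![1, c, c ^ 2 ^ e, c ^ 2 ^ e * c], ![1, d, d ^ 2 ^ e, d ^ 2 ^ e * d]] := by
  have hU : IsUnit (Matrix.of ![![(1:F), a, a ^ 2 ^ e, a ^ 2 ^ e * a], ![1, b, b ^ 2 ^ e, b ^ 2 ^ e * b],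
      ![1, c, c ^ 2 ^ e, c ^ 2 ^ e * c], ![1, d, d ^ 2 ^ e, d ^ 2 ^ e * d]]) := by
    rw [Matrix.isUnit_iff_isUnit_det, isUnit_iff_ne_zero, det_four]
    simp only [Matrix.of_apply, Matrix.cons_val', Matrix.cons_val_zero, Matrix.cons_val_one,
      Matrix.head_cons, Matrix.empty_val', Matrix.cons_val_fin_one, Matrix.cons_val_two,
      Matrix.tail_cons, Matrix.cons_val_three, Matrix.head_fin_const]
    intro h0
    have h2 : (2:F) = 0 := by exact_mod_cast CharP.cast_eq_zero F 2
    have hex1 : ((a + d) * (b + c)) ^ 2 ^ e = (a ^ 2 ^ e + d ^ 2 ^ e) * (b ^ 2 ^ e + c ^ 2 ^ e) := by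
      rw [mul_pow, add_pow_char_pow, add_pow_char_pow]
    have hex2 : ((a + c) * (b + d)) ^ 2 ^ e = (a ^ 2 ^ e + c ^ 2 ^ e) * (b ^ 2 ^ e + d ^ 2 ^ e) := by
      rw [mul_pow, add_pow_char_pow, add_pow_char_pow]
    have hst : ((a + c) * (b + d)) * ((a + d) * (b + c)) ^ 2 ^ e
        = ((a + d) * (b + c)) * ((a + c) * (b + d)) ^ 2 ^ e := by
      rw [hex1, hex2]
      linear_combination h0 +
        (c * d * (b ^ 2 ^ e) * (d ^ 2 ^ e) - c * d * (b ^ 2 ^ e) * (c ^ 2 ^ e)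
          - c * d * (a ^ 2 ^ e) * (d ^ 2 ^ e) + c * d * (a ^ 2 ^ e) * (c ^ 2 ^ e)
          - b * d * (c ^ 2 ^ e) * (d ^ 2 ^ e) - b * d * (a ^ 2 ^ e) * (b ^ 2 ^ e)
          + b * c * (c ^ 2 ^ e) * (d ^ 2 ^ e) + b * c * (a ^ 2 ^ e) * (b ^ 2 ^ e)
          + a * d * (c ^ 2 ^ e) * (d ^ 2 ^ e) + a * d * (a ^ 2 ^ e) * (b ^ 2 ^ e)
          - a * c * (c ^ 2 ^ e) * (d ^ 2 ^ e) - a * c * (a ^ 2 ^ e) * (b ^ 2 ^ e)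
          + a * b * (b ^ 2 ^ e) * (d ^ 2 ^ e) - a * b * (b ^ 2 ^ e) * (c ^ 2 ^ e)
          - a * b * (a ^ 2 ^ e) * (d ^ 2 ^ e) + a * b * (a ^ 2 ^ e) * (c ^ 2 ^ e)) * h2
    have hadz : a + d ≠ 0 := fun hz => had (by linear_combination hz - d * h2)
    have hbcz : b + c ≠ 0 := fun hz => hbc (by linear_combination hz - c * h2)
    have hacz : a + c ≠ 0 := fun hz => hac (by linear_combination hz - c * h2)
    have hbdz : b + d ≠ 0 := fun hz => hbd (by linear_combination hz - d * h2)
    have heq := key_inj h e hh hcard hgcd (mul_ne_zero hacz hbdz) (mul_ne_zero hadz hbcz) hst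
    have hzero : (a + b) * (c + d) = 0 := by
      linear_combination heq + (a * c + b * d) * h2
    rcases mul_eq_zero.mp hzero with hz | hz
    · exact hab (by linear_combination hz - b * h2)
    · exact hcd (by linear_combination hz - d * h2)
  exact Matrix.linearIndependent_rows_iff_isUnit.mpr hU

lemma char_two_of_card {F : Type*} [Field F] [Fintype F] (h : ℕ) (hh : 0 < h)
    (hcard : Fintype.card F = 2 ^ h) : CharP F 2 := by
  obtain ⟨p, hpchar⟩ := CharP.exists F
  haveI := hpchar
  obtain ⟨n, hp, hcard'⟩ := FiniteField.card F p
  have hdvd : p ∣ 2 ^ h := by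
    rw [← hcard, hcard']
    exact dvd_pow_self p n.pos.ne'
  have hp2 : p = 2 := (Nat.prime_dvd_prime_iff_eq hp Nat.prime_two).mp
    (hp.dvd_of_dvd_pow hdvd)
  rwa [hp2] at hpchar

end SegreArcAux


open SegreArcAux in
/-- for `q = 2^h` and `σ : x ↦ x^{2^e}` with `gcd(e, h) = 1`, the set
`{(1, t, t^σ, t^{σ+1})} ∪ {(0,0,0,1)}` is an arc of size `q+1` in `PG(3, q)`:
any four of its points are linearly independent. -/
theorem segre_arc_3space {F : Type*} [Field F] [Fintype F] (h e : ℕ)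
    (hh : 0 < h) (hcard : Fintype.card F = 2 ^ h) (hgcd : Nat.gcd e h = 1)
    (S : Set (Fin 4 → F))
    (hS : S = {v | ∃ t : F, v = ![1, t, t ^ 2 ^ e, t ^ 2 ^ e * t]} ∪ {![0, 0, 0, 1]}) :
    S.ncard = 2 ^ h + 1 ∧
      ∀ u ∈ S, ∀ v ∈ S, ∀ w ∈ S, ∀ x ∈ S,
        u ≠ v → u ≠ w → u ≠ x → v ≠ w → v ≠ x → w ≠ x →
        LinearIndependent F ![u, v, w, x] := by
  haveI hchar : CharP F 2 := char_two_of_card h hh hcard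
  subst hS
  set P : F → (Fin 4 → F) := fun t => ![1, t, t ^ 2 ^ e, t ^ 2 ^ e * t] with hP
  have hPinj : Function.Injective P := by
    intro x y hxy
    have := congrFun hxy 1
    simpa [hP] using this
  constructor
  · have hrange : {v | ∃ t : F, v = ![1, t, t ^ 2 ^ e, t ^ 2 ^ e * t]} = Set.range P := by
      ext w
      simp [hP, Set.range, eq_comm]
    have hnotmem : ![(0:F), 0, 0, 1] ∉ Set.range P := by
      rintro ⟨t, ht⟩
      have := congrFun ht 0
      simp [hP] at this
    rw [hrange, Set.union_singleton, Set.ncard_insert_of_notMem hnotmem (Set.toFinite _)]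
    have : (Set.range P).ncard = Fintype.card F := by
      rw [← Nat.card_coe_set_eq, Nat.card_range_of_injective hPinj,
        Nat.card_eq_fintype_card]
    rw [this, hcard]
  · intro u hu v hv w hw x hx huv huw hux hvw hvx hwx
    simp only [Set.mem_union, Set.mem_setOf_eq, Set.mem_singleton_iff] at hu hv hw hx
    have hne : ∀ {s t : F}, (![1, s, s ^ 2 ^ e, s ^ 2 ^ e * s] : Fin 4 → F)
        ≠ ![1, t, t ^ 2 ^ e, t ^ 2 ^ e * t] → s ≠ t := by
      intro s t hst hEq; exact hst (by rw [hEq])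
    rcases hu with ⟨a, rfl⟩ | rfl
    · rcases hv with ⟨b, rfl⟩ | rfl
      · rcases hw with ⟨c, rfl⟩ | rfl
        · rcases hx with ⟨d, rfl⟩ | rfl
          · exact caseB h e hh hcard hgcd (hne huv) (hne huw) (hne hux)
              (hne hvw) (hne hvx) (hne hwx)
          · -- x = ∞
            have base := caseA h e hh hcard hgcd (hne huv) (hne huw) (hne hvw)
            let σ : Equiv.Perm (Fin 4) := ⟨![3, 0, 1, 2], ![1, 2, 3, 0], by decide, by decide⟩
            apply (linearIndependent_equiv σ).mp
            have : (![![1, a, a ^ 2 ^ e, a ^ 2 ^ e * a], ![1, b, b ^ 2 ^ e, b ^ 2 ^ e * b],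
                ![1, c, c ^ 2 ^ e, c ^ 2 ^ e * c], ![0, 0, 0, 1]] ∘ σ)
                = ![![(0:F),0,0,1], ![1, a, a ^ 2 ^ e, a ^ 2 ^ e * a],
                  ![1, b, b ^ 2 ^ e, b ^ 2 ^ e * b], ![1, c, c ^ 2 ^ e, c ^ 2 ^ e * c]] := by
              funext i; fin_cases i <;> rfl
            rw [this]; exact base
        · -- w = ∞
          rcases hx with ⟨c, rfl⟩ | rfl
          · have base := caseA h e hh hcard hgcd (hne huv) (hne hux) (hne hvx)
            let σ : Equiv.Perm (Fin 4) := ⟨![2, 0, 1, 3], ![1, 2, 0, 3], by decide, by decide⟩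
            apply (linearIndependent_equiv σ).mp
            have : (![![1, a, a ^ 2 ^ e, a ^ 2 ^ e * a], ![1, b, b ^ 2 ^ e, b ^ 2 ^ e * b],
                ![0, 0, 0, 1], ![1, c, c ^ 2 ^ e, c ^ 2 ^ e * c]] ∘ σ)
                = ![![(0:F),0,0,1], ![1, a, a ^ 2 ^ e, a ^ 2 ^ e * a],
                  ![1, b, b ^ 2 ^ e, b ^ 2 ^ e * b], ![1, c, c ^ 2 ^ e, c ^ 2 ^ e * c]] := by
              funext i; fin_cases i <;> rfl
            rw [this]; exact base
          · exact absurd rfl hwx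
      · -- v = ∞
        rcases hw with ⟨b, rfl⟩ | rfl
        · rcases hx with ⟨c, rfl⟩ | rfl
          · have base := caseA h e hh hcard hgcd (hne huw) (hne hux) (hne hwx)
            let σ : Equiv.Perm (Fin 4) := ⟨![1, 0, 2, 3], ![1, 0, 2, 3], by decide, by decide⟩
            apply (linearIndependent_equiv σ).mp
            have : (![![1, a, a ^ 2 ^ e, a ^ 2 ^ e * a], ![0, 0, 0, 1],
                ![1, b, b ^ 2 ^ e, b ^ 2 ^ e * b], ![1, c, c ^ 2 ^ e, c ^ 2 ^ e * c]] ∘ σ)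
                = ![![(0:F),0,0,1], ![1, a, a ^ 2 ^ e, a ^ 2 ^ e * a],
                  ![1, b, b ^ 2 ^ e, b ^ 2 ^ e * b], ![1, c, c ^ 2 ^ e, c ^ 2 ^ e * c]] := by
              funext i; fin_cases i <;> rfl
            rw [this]; exact base
          · exact absurd rfl hvx
        · exact absurd rfl hvw
    · -- u = ∞
      rcases hv with ⟨a, rfl⟩ | rfl
      · rcases hw with ⟨b, rfl⟩ | rfl
        · rcases hx with ⟨c, rfl⟩ | rfl
          · exact caseA h e hh hcard hgcd (hne hvw) (hne hvx) (hne hwx)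
          · exact absurd rfl hux
        · exact absurd rfl huw
      · exact absurd rfl huv
end

section
/- Let η ∈ F_9 satisfy η^4 = -1. The set {(1, t, t^2 + η t^6, t^3, t^4) : t ∈ F_9} ∪ {(0,0,0,0,1)} is an arc of size 10 in PG(4, 9), i.e., any 5 of these points are linearly independent over F_9. -/
/-!
Parametrise the ten points by `Option F`, and write `D(a, b)` for the determinant of five
points of the curve `(1, t, a t² + b t⁶, t³, t⁴)` (with `(0,0,0,0,1)` at infinity). It is linear
in `(a, b)`, and `D(1, 0)` is a determinant of the normal rational curve, which is nonzero for
distinct points (Vandermonde). Over `F₉` the Frobenius `y ↦ y³` fixes `1` and `t⁴`, swaps `t`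
and `t³`, and sends `a t² + b t⁶` to `b³ t² + a³ t⁶`, so `D(a, b)³ = -D(b³, a³)`. Hence
`D(1, η) = 0` forces `D(η³, 1) = 0`, and eliminating `D(0, 1)` leaves `(1 - η⁴) D(1, 0) = 0`,
i.e. `2 D(1, 0) = 0` when `η⁴ = -1`: a contradiction in characteristic 3.
-/

open Matrix

section MomentCurve

variable {F : Type*} [Field F] {n : ℕ}

/-- `none` is the point at infinity. -/
def momentPoint (n : ℕ) : Option F → Fin (n + 1) → F
  | some t => fun j => t ^ (j : ℕ)
  | none => Pi.single (Fin.last n) 1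

theorem det_momentPoint_ne_zero {x : Fin (n + 1) → Option F} (hx : Function.Injective x) :
    (Matrix.of fun i => momentPoint n (x i)).det ≠ 0 := by
  set M := Matrix.of fun i => momentPoint n (x i)
  by_cases hinf : ∃ k, x k = none
  · obtain ⟨k, hk⟩ := hinf
    have hsome : ∀ i : Fin n, ∃ t, x (k.succAbove i) = some t := fun i =>
      Option.ne_none_iff_exists'.mp fun h => Fin.succAbove_ne k i (hx (h.trans hk.symm))
    choose t ht using hsome
    have htinj : Function.Injective t := fun i j hij =>
      Fin.succAbove_right_injective (hx (by rw [ht, ht, hij]))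
    have hrow : M k = Pi.single (Fin.last n) 1 := congrArg (momentPoint n) hk
    have hminor : M.submatrix k.succAbove Fin.castSucc = vandermonde t := by
      ext i j; simp [M, ht, momentPoint]
    rw [det_succ_row _ k, Finset.sum_eq_single (Fin.last n)]
    · simp [hrow, Fin.succAbove_last, hminor, det_vandermonde_ne_zero_iff.mpr htinj]
    · intro j _ hj; simp [hrow, hj]
    · simp
  · push Not at hinf
    have hsome : ∀ i, ∃ t, x i = some t := fun i => Option.ne_none_iff_exists'.mp (hinf i)
    choose t ht using hsome
    have htinj : Function.Injective t := fun i j hij => hx (by rw [ht, ht, hij])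
    have : M = vandermonde t := by
      ext i j; simp [M, ht, momentPoint]
    rw [this]
    exact det_vandermonde_ne_zero_iff.mpr htinj

end MomentCurve

section GlynnCurve

variable {F : Type*} [Field F]

def glynnPoint (a b : F) : Option F → Fin 5 → F
  | some t => ![1, t, a * t ^ 2 + b * t ^ 6, t ^ 3, t ^ 4]
  | none => ![0, 0, 0, 0, 1]

def glynnMatrix (a b : F) (x : Fin 5 → Option F) : Matrix (Fin 5) (Fin 5) F :=
  Matrix.of fun i => glynnPoint a b (x i)

theorem glynnPoint_injective (a b : F) : Function.Injective (glynnPoint a b) := by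
  rintro (_ | s) (_ | t) h
  · rfl
  · simpa [glynnPoint] using congrFun h 0
  · simpa [glynnPoint] using congrFun h 0
  · simpa [glynnPoint] using congrFun h 1

theorem glynnPoint_one_zero : glynnPoint (1 : F) 0 = momentPoint 4 := by
  funext x j
  cases x <;> fin_cases j <;> simp [glynnPoint, momentPoint]

theorem glynnMatrix_eq_updateCol (a b : F) (x : Fin 5 → Option F) :
    glynnMatrix a b x = (glynnMatrix 0 0 x).updateCol 2
      (a • (fun i => (x i).elim 0 (· ^ 2)) + b • (fun i => (x i).elim 0 (· ^ 6))) := by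
  ext i j
  simp only [glynnMatrix, of_apply, updateCol_apply, Pi.add_apply, Pi.smul_apply]
  cases x i <;> fin_cases j <;> simp [glynnPoint]

theorem det_glynnMatrix (a b : F) (x : Fin 5 → Option F) :
    (glynnMatrix a b x).det = a * (glynnMatrix 1 0 x).det + b * (glynnMatrix 0 1 x).det := by
  rw [glynnMatrix_eq_updateCol a b, glynnMatrix_eq_updateCol 1 0, glynnMatrix_eq_updateCol 0 1,
    det_updateCol_add, det_updateCol_smul, det_updateCol_smul]
  simp

end GlynnCurve

section NineElementField

variable {F : Type*} [Field F] [Fintype F]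

theorem charP_three_of_card_eq_nine (hF : Fintype.card F = 9) : CharP F 3 := by
  obtain ⟨p, hchar, n, hp, hcard⟩ := FiniteField.card' F
  have hp3 : p ∣ 3 ^ 2 := by
    rw [← show 9 = 3 ^ 2 from rfl, ← hF, hcard]
    exact dvd_pow_self p n.ne_zero
  rwa [(Nat.prime_dvd_prime_iff_eq hp Nat.prime_three).mp (hp.dvd_of_dvd_pow hp3)] at hchar

theorem glynnPoint_pow_three (hF : Fintype.card F = 9) (a b : F) (x : Option F) (j : Fin 5) :
    glynnPoint a b x j ^ 3 = glynnPoint (b ^ 3) (a ^ 3) x (Equiv.swap 1 3 j) := by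
  have := charP_three_of_card_eq_nine hF
  have h9 (y : F) : y ^ 9 = y := hF ▸ FiniteField.pow_card y
  cases x with
  | none => fin_cases j <;> simp [glynnPoint, Equiv.swap_apply_def]
  | some t =>
    fin_cases j <;> simp [glynnPoint, Equiv.swap_apply_def]
    · rw [add_pow_char, mul_pow, mul_pow, ← pow_mul, ← pow_mul,
        show t ^ (6 * 3) = (t ^ 9) ^ 2 by ring, h9]
      ring
    · rw [← pow_mul, h9]
    · rw [← pow_mul, show 4 * 3 = 9 + 3 from rfl, pow_add, h9]
      ring

theorem det_glynnMatrix_pow_three (hF : Fintype.card F = 9) (a b : F) (x : Fin 5 → Option F) :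
    (glynnMatrix a b x).det ^ 3 = -(glynnMatrix (b ^ 3) (a ^ 3) x).det := by
  have := charP_three_of_card_eq_nine hF
  have hmap : (glynnMatrix a b x).map (frobenius F 3)
      = (glynnMatrix (b ^ 3) (a ^ 3) x).submatrix id (Equiv.swap 1 3) := by
    ext i j; exact glynnPoint_pow_three hF a b (x i) j
  rw [← frobenius_def, RingHom.map_det, RingHom.mapMatrix_apply, hmap, det_permute',
    Equiv.Perm.sign_swap (by decide)]
  simp

theorem det_glynnMatrix_ne_zero (hF : Fintype.card F = 9) {η : F} (hη : η ^ 4 = -1)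
    {x : Fin 5 → Option F} (hx : Function.Injective x) : (glynnMatrix 1 η x).det ≠ 0 := by
  have h3 : (3 : F) = 0 := by
    have := charP_three_of_card_eq_nine hF; exact_mod_cast CharP.cast_eq_zero F 3
  have hmoment : (glynnMatrix 1 0 x).det ≠ 0 := by
    simpa [glynnMatrix, glynnPoint_one_zero] using det_momentPoint_ne_zero hx
  intro h0
  have hsplit := det_glynnMatrix 1 η x
  have hfrob := det_glynnMatrix_pow_three hF 1 η x
  rw [h0] at hsplit hfrob
  rw [det_glynnMatrix] at hfrob
  set D := (glynnMatrix 1 0 x).det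
  exact hmoment (by linear_combination hsplit + η * hfrob - D * hη + D * h3)

theorem linearIndependent_glynnPoint (hF : Fintype.card F = 9) {η : F} (hη : η ^ 4 = -1)
    {x : Fin 5 → Option F} (hx : Function.Injective x) :
    LinearIndependent F fun i => glynnPoint 1 η (x i) :=
  linearIndependent_rows_iff_isUnit.mpr <|
    (isUnit_iff_isUnit_det _).mpr (det_glynnMatrix_ne_zero hF hη hx).isUnit

end NineElementField

/-- Glynn's arc: for `η ∈ F₉` with `η⁴ = -1`, the set
`{(1, t, t² + η t⁶, t³, t⁴) : t ∈ F₉} ∪ {(0,0,0,0,1)}` is an arc of size 10 in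
`PG(4, 9)`: any five of its points are linearly independent. -/
theorem glynn_arc {F : Type*} [Field F] [Fintype F] (hF : Fintype.card F = 9)
    (η : F) (hη : η ^ 4 = -1)
    (S : Set (Fin 5 → F))
    (hS : S = {v | ∃ t : F, v = ![1, t, t ^ 2 + η * t ^ 6, t ^ 3, t ^ 4]}
            ∪ {![0, 0, 0, 0, 1]}) :
    S.ncard = 10 ∧
      ∀ v₁ ∈ S, ∀ v₂ ∈ S, ∀ v₃ ∈ S, ∀ v₄ ∈ S, ∀ v₅ ∈ S,
        v₁ ≠ v₂ → v₁ ≠ v₃ → v₁ ≠ v₄ → v₁ ≠ v₅ →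
        v₂ ≠ v₃ → v₂ ≠ v₄ → v₂ ≠ v₅ → v₃ ≠ v₄ → v₃ ≠ v₅ → v₄ ≠ v₅ →
        LinearIndependent F ![v₁, v₂, v₃, v₄, v₅] := by
  have hS' : S = Set.range (glynnPoint 1 η) := by
    rw [hS]; ext v; simp [glynnPoint, Option.exists, eq_comm]
  subst hS'
  refine ⟨?_, ?_⟩
  · rw [Set.ncard_range_of_injective (glynnPoint_injective 1 η), Nat.card_eq_fintype_card,
      Fintype.card_option, hF]
  · intro v₁ h₁ v₂ h₂ v₃ h₃ v₄ h₄ v₅ h₅ h12 h13 h14 h15 h23 h24 h25 h34 h35 h45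
    have hv : Function.Injective ![v₁, v₂, v₃, v₄, v₅] := by
      simp only [vecCons, Fin.cons_injective_iff, Fin.range_cons]
      simp [h12, h13, h14, h15, h23, h24, h25, h34, h35, h45, Function.injective_of_subsingleton]
    have hmem : ∀ i, ![v₁, v₂, v₃, v₄, v₅] i ∈ Set.range (glynnPoint 1 η) := by
      intro i; fin_cases i <;> assumption
    choose x hx using hmem
    rw [← funext hx] at hv ⊢
    exact linearIndependent_glynnPoint hF hη (hv.of_comp (f := glynnPoint 1 η))
end

section
/- If q is odd, then a planar arc in PG(2, q) has size at most q + 1. -/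
/-- A set of points of `PG(2, F)` is a planar arc if no three of its points are
collinear, i.e. any three distinct points are independent. -/
def IsArcIn (F : Type*) [Field F] (m : ℕ)
    (A : Set (Projectivization F (Fin m → F))) : Prop :=
  ∀ f : Fin m → Projectivization F (Fin m → F),
    Function.Injective f → (∀ i, f i ∈ A) → Projectivization.Independent f

/-!
Suppose an arc `B` has `q + 2` points and let `P ∈ B`. The other `q + 1` points of `B` lie on
distinct lines through `P`, and there are only `q + 1` such lines, so every line through `P` meets
`B` a second time. Hence, for a point `Q ∉ B`, each line through `Q` meets `B` in zero or two
points, and `q + 2` would be even.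
-/

open Module

namespace Submodule

variable {R M : Type*} [Ring R] [AddCommGroup M] [Module R M]

theorem map_mkQ_eq_map_mkQ_iff {W p p' : Submodule R M} :
    p.map W.mkQ = p'.map W.mkQ ↔ W ⊔ p = W ⊔ p' := by
  have map_sup_self (p : Submodule R M) : (W ⊔ p).map W.mkQ = p.map W.mkQ := by
    rw [map_sup, mkQ_map_self, bot_sup_eq]
  exact ⟨fun h => by rw [← comap_map_mkQ, h, comap_map_mkQ],
    fun h => by rw [← map_sup_self, h, map_sup_self]⟩

end Submodule

namespace Projectivization

open scoped LinearAlgebra.Projectivization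

variable {K V : Type*} [DivisionRing K] [AddCommGroup V] [Module K V]

theorem rep_mem_submodule (P : ℙ K V) : P.rep ∈ P.submodule := by
  rw [submodule_eq]
  exact Submodule.mem_span_singleton_self _

theorem disjoint_submodule_of_ne {P R : ℙ K V} (h : P ≠ R) :
    Disjoint P.submodule R.submodule :=
  (independent_iff_iSupIndep.mp ((independent_pair_iff_ne P R).mpr h)).pairwiseDisjoint
    (show (0 : Fin 2) ≠ 1 by decide)

theorem finrank_sup_submodule_of_ne {P R : ℙ K V} (h : P ≠ R) :
    finrank K ↥(P.submodule ⊔ R.submodule) = 2 := by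
  have := Submodule.finrank_sup_add_finrank_inf_eq P.submodule R.submodule
  rwa [(disjoint_submodule_of_ne h).eq_bot, finrank_bot, finrank_submodule, finrank_submodule]
    at this

theorem sup_submodule_eq_of_le {P R : ℙ K V} (h : P ≠ R) {L : Submodule K V}
    (hL : finrank K L = 2) (hP : P.submodule ≤ L) (hR : R.submodule ≤ L) :
    P.submodule ⊔ R.submodule = L :=
  haveI := Module.finite_of_finrank_eq_succ hL
  Submodule.eq_of_le_of_finrank_eq (sup_le hP hR) (by rw [finrank_sup_submodule_of_ne h, hL])

theorem finrank_map_mkQ_submodule_of_ne {P R : ℙ K V} (h : R ≠ P) :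
    finrank K ↥(R.submodule.map P.submodule.mkQ) = 1 := by
  rw [submodule_eq R, Submodule.map_span, Set.image_singleton]
  refine finrank_span_singleton fun h0 => R.rep_nonzero ?_
  rw [Submodule.mkQ_apply, Submodule.Quotient.mk_eq_zero] at h0
  exact Submodule.disjoint_def.mp (disjoint_submodule_of_ne h) _ R.rep_mem_submodule h0

theorem ncard_setOf_finrank_eq_one (W : Type*) [AddCommGroup W] [Module K W] :
    {H : Submodule K W | finrank K H = 1}.ncard = Nat.card (ℙ K W) := by
  rw [← Nat.card_coe_set_eq]
  exact (Nat.card_congr (equivSubmodule K W)).symm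

def IsArc (B : Set (ℙ K V)) : Prop :=
  ∀ ⦃P⦄, P ∈ B → ∀ ⦃R⦄, R ∈ B → ∀ ⦃S⦄, S ∈ B → P ≠ R → S ≠ P → S ≠ R →
    ¬ S.submodule ≤ P.submodule ⊔ R.submodule

namespace IsArc

theorem mono {A B : Set (ℙ K V)} (hA : IsArc A) (hBA : B ⊆ A) : IsArc B :=
  fun _ hP _ hR _ hS => hA (hBA hP) (hBA hR) (hBA hS)

open Classical in
theorem card_filter_le_two {B : Finset (ℙ K V)} (hB : IsArc (B : Set (ℙ K V)))
    {L : Submodule K V} (hL : finrank K L = 2) : {S ∈ B | S.submodule ≤ L}.card ≤ 2 := by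
  by_contra! h
  obtain ⟨P, hP, R, hR, S, hS, hPR, hPS, hRS⟩ := Finset.two_lt_card.mp h
  simp only [Finset.mem_filter] at hP hR hS
  exact hB hP.1 hR.1 hS.1 hPR hPS.symm hRS.symm (sup_submodule_eq_of_le hPR hL hP.2 hR.2 ▸ hS.2)

theorem even_card {B : Finset (ℙ K V)} (hB : IsArc (B : Set (ℙ K V))) {Q : ℙ K V} (hQ : Q ∉ B)
    (hpair : ∀ P ∈ B, ∃ R ∈ B, R ≠ P ∧ Q.submodule ≤ P.submodule ⊔ R.submodule) :
    Even B.card := by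
  classical
  have hfiber : ∀ P ∈ B,
      {S ∈ B | Q.submodule ⊔ S.submodule = Q.submodule ⊔ P.submodule}.card = 2 := by
    intro P hP
    obtain ⟨R, hR, hRP, hQPR⟩ := hpair P hP
    have hQP : Q ≠ P := fun h => hQ (h ▸ hP)
    have hQR : Q ≠ R := fun h => hQ (h ▸ hR)
    have hline : finrank K ↥(Q.submodule ⊔ P.submodule) = 2 := finrank_sup_submodule_of_ne hQP
    refine le_antisymm ?_ ?_
    · refine le_trans (Finset.card_le_card fun S hS => ?_) (hB.card_filter_le_two hline)
      simp only [Finset.mem_filter] at hS ⊢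
      exact ⟨hS.1, hS.2 ▸ le_sup_right⟩
    · have hPR : finrank K ↥(P.submodule ⊔ R.submodule) = 2 :=
        finrank_sup_submodule_of_ne hRP.symm
      have hR_fiber : Q.submodule ⊔ R.submodule = Q.submodule ⊔ P.submodule := by
        rw [sup_submodule_eq_of_le hQR hPR hQPR le_sup_right,
          sup_submodule_eq_of_le hQP hPR hQPR le_sup_left]
      calc 2 = ({P, R} : Finset _).card := (Finset.card_pair hRP.symm).symm
        _ ≤ _ := Finset.card_le_card <| by simp [Finset.insert_subset_iff, hP, hR, hR_fiber]
  rw [Finset.card_eq_sum_card_image (fun S => Q.submodule ⊔ S.submodule) B,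
    Finset.sum_congr rfl fun H hH => ?_, Finset.sum_const, smul_eq_mul]
  · exact even_two.mul_left _
  · obtain ⟨P, hP, rfl⟩ := Finset.mem_image.mp hH
    exact hfiber P hP

theorem exists_le_sup_of_card_eq [Finite K] (hV : finrank K V = 3) {B : Finset (ℙ K V)}
    (hB : IsArc (B : Set (ℙ K V))) (hcard : B.card = Nat.card K + 2) {P : ℙ K V} (hP : P ∈ B)
    {Q : ℙ K V} (hQP : Q ≠ P) : ∃ R ∈ B, R ≠ P ∧ Q.submodule ≤ P.submodule ⊔ R.submodule := by
  classical
  have := Module.finite_of_finrank_eq_succ hV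
  -- the line `PR` is recorded as the one-dimensional subspace `R.submodule.map P.submodule.mkQ`
  have hlines : {H : Submodule K (V ⧸ P.submodule) | finrank K H = 1}.ncard = Nat.card K + 1 := by
    have hdim := P.submodule.finrank_quotient_add_finrank
    rw [finrank_submodule, hV] at hdim
    rw [ncard_setOf_finrank_eq_one, card_of_finrank_two K _ (by omega)]
  have hinj : ∀ R S, R ∈ (B.erase P : Set (ℙ K V)) → S ∈ (B.erase P : Set (ℙ K V)) →
      R.submodule.map P.submodule.mkQ = S.submodule.map P.submodule.mkQ → R = S := by
    intro R S hR hS hRS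
    rw [Finset.mem_coe, Finset.mem_erase] at hR hS
    by_contra hne
    exact hB hP hR.2 hS.2 hR.1.symm hS.1 (Ne.symm hne)
      (Submodule.map_mkQ_eq_map_mkQ_iff.mp hRS ▸ le_sup_right)
  obtain ⟨R, hR, hRQ⟩ := Set.surj_on_of_inj_on_of_ncard_le
    (t := {H : Submodule K (V ⧸ P.submodule) | finrank K H = 1})
    (fun R _ => R.submodule.map P.submodule.mkQ)
    (fun R hR => finrank_map_mkQ_submodule_of_ne (Finset.ne_of_mem_erase hR)) hinj
    (by rw [hlines, Set.ncard_coe_finset, Finset.card_erase_of_mem hP, hcard]; omega)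
    (Set.finite_of_ncard_ne_zero (by omega)) _ (finrank_map_mkQ_submodule_of_ne hQP)
  exact ⟨R, Finset.mem_of_mem_erase hR, Finset.ne_of_mem_erase hR,
    Submodule.map_mkQ_eq_map_mkQ_iff.mp hRQ ▸ le_sup_right⟩

theorem ncard_le [Finite K] (hV : finrank K V = 3) (hq : Odd (Nat.card K)) {A : Set (ℙ K V)}
    (hA : IsArc A) : A.ncard ≤ Nat.card K + 1 := by
  by_contra! h
  obtain ⟨B, hBA, hB⟩ := Set.exists_subset_card_eq (Nat.succ_le_of_lt h)
  lift B to Finset (ℙ K V) using Set.finite_of_ncard_pos (by omega)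
  rw [Set.ncard_coe_finset] at hB
  obtain ⟨Q, hQ⟩ : ∃ Q, Q ∉ B := by
    by_contra! hall
    have hcard := Set.ncard_univ (ℙ K V)
    rw [← Set.eq_univ_of_forall hall, Set.ncard_coe_finset, hB, card_of_finrank K V hV] at hcard
    simp only [Finset.sum_range_succ, Finset.sum_range_zero] at hcard
    nlinarith [Finite.one_lt_card (α := K)]
  have heven := (hA.mono hBA).even_card hQ fun P hP =>
    (hA.mono hBA).exists_le_sup_of_card_eq hV hB hP (ne_of_mem_of_not_mem hP hQ).symm
  rw [hB] at heven
  exact Nat.not_even_iff_odd.mpr (hq.add_even even_two) heven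

end IsArc

end Projectivization

theorem IsArcIn.isArc {F : Type*} [Field F] {A : Set (Projectivization F (Fin 3 → F))}
    (hA : IsArcIn F 3 A) : Projectivization.IsArc A := by
  intro P hP R hR S hS hPR hSP hSR hle
  have hind := Projectivization.independent_iff_iSupIndep.mp <| hA ![P, R, S]
    (by intro i j hij; fin_cases i <;> fin_cases j <;> simp_all [eq_comm])
    (by intro i; fin_cases i <;> assumption)
  have hdisj : Disjoint S.submodule (P.submodule ⊔ R.submodule) := by
    simpa using hind.disjoint_biSup (x := 2) (y := {0, 1}) (by decide)
  exact S.rep_nonzero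
    (Submodule.disjoint_def.mp hdisj _ S.rep_mem_submodule (hle S.rep_mem_submodule))

/-- if `q` is odd then a planar arc in `PG(2, q)` has at most `q + 1`
points. -/
theorem planar_arc_card_le_of_odd {F : Type*} [Field F] [Fintype F]
    (hq : Odd (Fintype.card F))
    (A : Set (Projectivization F (Fin 3 → F))) (hA : IsArcIn F 3 A) :
    A.ncard ≤ Fintype.card F + 1 := by
  rw [← Nat.card_eq_fintype_card] at hq ⊢
  exact hA.isArc.ncard_le (by simp) hq
end

section
/- Segre's lemma of tangents (coordinate-free version): Let 𝒜 be an arc of PG(k-1, q) of size q + k - 1 - t, let D ⊆ 𝒜 with |D| = k - 3, and for each (k-2)-subset S of 𝒜 let f_S be a product of t linear forms whose kernels are the t hyperplanes meeting 𝒜 exactly in S. Then for all distinct x, y, z ∈ 𝒜 \ D: f_{D∪{x}}(y) · f_{D∪{y}}(z) · f_{D∪{z}}(x) = (-1)^{t+1} · f_{D∪{y}}(x) · f_{D∪{z}}(y) · f_{D∪{x}}(z). -/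
/-- `f` is a tangent form of the arc `A` (with fixed vector representatives) at the
`(k-2)`-subset `S`: `f` is a product of `t` linear forms whose kernels are `t`
distinct hyperplanes each meeting `A` exactly in `S`. -/
def IsTangentForm {F : Type*} [Field F] {k t : ℕ}
    (A S : Finset (Fin k → F)) (f : (Fin k → F) → F) : Prop :=
  ∃ φ : Fin t → ((Fin k → F) →ₗ[F] F),
    (∀ i, φ i ≠ 0) ∧
    Function.Injective (fun i => LinearMap.ker (φ i)) ∧
    (∀ i, ∀ a ∈ A, (φ i a = 0 ↔ a ∈ S)) ∧
    (∀ v, f v = ∏ i, φ i v)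

/-- A linear functional vanishing on `k` linearly independent vectors of `F^k` is zero. -/
lemma vanish_of_k_points {F : Type*} [Field F] {k : ℕ}
    (s : Finset (Fin k → F))
    (hli : LinearIndependent F (fun v : s => (v : Fin k → F)))
    (hcard : s.card = k)
    (ψ : (Fin k → F) →ₗ[F] F) (hψ : ∀ v ∈ s, ψ v = 0) : ψ = 0 := by
  rcases Nat.eq_zero_or_pos k with h | hk0
  · subst h
    apply LinearMap.ext
    intro v
    have : v = (0 : Fin 0 → F) := funext fun i => i.elim0
    rw [this]
    exact map_zero ψ
  · have hne : s.Nonempty := by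
      rw [← Finset.card_pos, hcard]; exact hk0
    haveI : Nonempty ↥s := hne.to_subtype
    have hcard' : Fintype.card ↥s = Module.finrank F (Fin k → F) := by
      rw [Fintype.card_coe, hcard, Module.finrank_fintype_fun_eq_card, Fintype.card_fin]
    let b := basisOfLinearIndependentOfCardEqFinrank hli hcard'
    apply b.ext
    intro i
    have hb : b i = (i : Fin k → F) := by
      rw [show (b : ↥s → (Fin k → F)) = _ from
        coe_basisOfLinearIndependentOfCardEqFinrank hli hcard']
    rw [hb]
    simpa using hψ i i.2

/-- The product of all nonzero elements of a finite field is `-1`. -/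
lemma prod_erase_zero_eq_neg_one {F : Type*} [Field F] [Fintype F] [DecidableEq F] :
    ∏ a ∈ (Finset.univ : Finset F).erase 0, a = -1 := by
  have h1 : ∏ a ∈ (Finset.univ : Finset F).erase 0, a = ∏ u : Fˣ, (u : F) := by
    refine (Finset.prod_nbij (fun u : Fˣ => (u : F)) ?_ ?_ ?_ ?_).symm
    · intro u _; simp [Finset.mem_erase, u.ne_zero]
    · intro u _ v _ h; exact Units.ext h
    · intro a ha
      simp only [Finset.coe_erase, Set.mem_diff, Finset.coe_univ, Set.mem_univ, true_and,
        Set.mem_singleton_iff] at ha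
      exact ⟨Units.mk0 a ha, by simp, rfl⟩
    · intro u _; rfl
  have h2 := map_prod (Units.coeHom F) (fun u : Fˣ => u) Finset.univ
  simp only [Units.coeHom_apply] at h2
  rw [h1, ← h2, FiniteField.prod_univ_units_id_eq_neg_one]
  simp

/-- The key single-coordinate identity of Segre's lemma of tangents. -/
lemma segre_aux {F : Type*} [Field F] [Fintype F] [DecidableEq F] {k t : ℕ}
    (A : Finset (Fin k → F))
    (hArc : ∀ s ⊆ A, s.card ≤ k → LinearIndependent F (fun v : s => (v : Fin k → F)))
    (hsize : A.card + t = Fintype.card F + k - 1)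
    (S : Finset (Fin k → F)) (hS : S ⊆ A) (hScard : S.card + 2 = k)
    (y z : Fin k → F) (hy : y ∈ A) (hz : z ∈ A) (hyS : y ∉ S) (hzS : z ∉ S) (hyz : y ≠ z)
    (Y Z : (Fin k → F) →ₗ[F] F)
    (hYy : Y y = 1) (hZz : Z z = 1) (hYz : Y z = 0) (hZy : Z y = 0)
    (hYS : ∀ s ∈ S, Y s = 0) (hZS : ∀ s ∈ S, Z s = 0)
    (hspan : ∀ ψ : (Fin k → F) →ₗ[F] F, (∀ s ∈ S, ψ s = 0) →
        ψ = (ψ y) • Y + (ψ z) • Z)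
    (f : (Fin k → F) → F) (hf : IsTangentForm (t := t) A S f) :
    ((-1 : F)^t * f y * ∏ a ∈ A \ insert y (insert z S), Z a
      = - (f z * ∏ a ∈ A \ insert y (insert z S), Y a))
    ∧ f z * ∏ a ∈ A \ insert y (insert z S), Y a ≠ 0 := by
  obtain ⟨φ, hφne, hφinj, hφtan, hφprod⟩ := hf
  set E := A \ insert y (insert z S) with hE
  have hEmem : ∀ a ∈ E, a ∈ A ∧ a ≠ y ∧ a ≠ z ∧ a ∉ S := by
    intro a ha
    simp only [hE, Finset.mem_sdiff, Finset.mem_insert] at ha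
    tauto
  have hexp : ∀ (ψ : (Fin k → F) →ₗ[F] F), (∀ s ∈ S, ψ s = 0) →
      ∀ v, ψ v = Y v * ψ y + Z v * ψ z := by
    intro ψ h v
    conv_lhs => rw [hspan ψ h]
    simp only [LinearMap.add_apply, LinearMap.smul_apply, smul_eq_mul]
    ring
  have hφS : ∀ i, ∀ s ∈ S, φ i s = 0 := fun i s hs => (hφtan i s (hS hs)).2 hs
  have hφy : ∀ i, φ i y ≠ 0 := fun i h => hyS ((hφtan i y hy).1 h)
  have hφz : ∀ i, φ i z ≠ 0 := fun i h => hzS ((hφtan i z hz).1 h)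
  -- nonvanishing of coordinates on E
  have hYE : ∀ a ∈ E, Y a ≠ 0 := by
    intro a ha h0
    obtain ⟨haA, hay, haz, haS⟩ := hEmem a ha
    have hsub : insert a (insert z S) ⊆ A := by
      intro v hv; simp only [Finset.mem_insert] at hv
      rcases hv with rfl | rfl | hv
      exacts [haA, hz, hS hv]
    have hcard : (insert a (insert z S)).card = k := by
      rw [Finset.card_insert_of_notMem (by simp [haz, haS]),
        Finset.card_insert_of_notMem hzS]
      omega
    have hvan : ∀ v ∈ insert a (insert z S), Y v = 0 := by
      intro v hv; simp only [Finset.mem_insert] at hv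
      rcases hv with rfl | rfl | hv
      exacts [h0, hYz, hYS v hv]
    have h := vanish_of_k_points _ (hArc _ hsub (le_of_eq hcard)) hcard Y hvan
    rw [h] at hYy
    simp at hYy
  have hZE : ∀ a ∈ E, Z a ≠ 0 := by
    intro a ha h0
    obtain ⟨haA, hay, haz, haS⟩ := hEmem a ha
    have hsub : insert a (insert y S) ⊆ A := by
      intro v hv; simp only [Finset.mem_insert] at hv
      rcases hv with rfl | rfl | hv
      exacts [haA, hy, hS hv]
    have hcard : (insert a (insert y S)).card = k := by
      rw [Finset.card_insert_of_notMem (by simp [hay, haS]),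
        Finset.card_insert_of_notMem hyS]
      omega
    have hvan : ∀ v ∈ insert a (insert y S), Z v = 0 := by
      intro v hv; simp only [Finset.mem_insert] at hv
      rcases hv with rfl | rfl | hv
      exacts [h0, hZy, hZS v hv]
    have h := vanish_of_k_points _ (hArc _ hsub (le_of_eq hcard)) hcard Z hvan
    rw [h] at hZz
    simp at hZz
  -- distinct secant points have distinct slopes
  have hsec : ∀ a ∈ E, ∀ b ∈ E, Z a * Y b = Y a * Z b → a = b := by
    intro a ha b hb hab
    by_contra hne
    obtain ⟨haA, hay, haz, haS⟩ := hEmem a ha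
    obtain ⟨hbA, hby, hbz, hbS⟩ := hEmem b hb
    set ψ := Z a • Y - Y a • Z with hψ
    have hsub : insert a (insert b S) ⊆ A := by
      intro v hv; simp only [Finset.mem_insert] at hv
      rcases hv with rfl | rfl | hv
      exacts [haA, hbA, hS hv]
    have hcard : (insert a (insert b S)).card = k := by
      rw [Finset.card_insert_of_notMem (by simp [hne, haS]),
        Finset.card_insert_of_notMem hbS]
      omega
    have hvan : ∀ v ∈ insert a (insert b S), ψ v = 0 := by
      intro v hv; simp only [Finset.mem_insert] at hv
      simp only [hψ, LinearMap.sub_apply, LinearMap.smul_apply, smul_eq_mul]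
      rcases hv with rfl | rfl | hv
      · ring
      · linear_combination hab
      · rw [hYS v hv, hZS v hv]; ring
    have h0 := vanish_of_k_points _ (hArc _ hsub (le_of_eq hcard)) hcard ψ hvan
    have : ψ z = 0 := by rw [h0]; rfl
    simp only [hψ, LinearMap.sub_apply, LinearMap.smul_apply, smul_eq_mul, hYz, hZz,
      mul_zero, mul_one, zero_sub, neg_eq_zero] at this
    exact hYE a ha this
  -- tangents with proportional coefficients coincide
  have hker : ∀ i j, φ i y * φ j z = φ j y * φ i z → i = j := by
    have key : ∀ i j, φ i y * φ j z = φ j y * φ i z → ∀ v, φ i v = 0 → φ j v = 0 := by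
      intro i j hij v hv
      have h1 := hexp (φ i) (hφS i) v
      have h2 := hexp (φ j) (hφS j) v
      have hmain : φ j v * φ i z = φ i v * φ j z := by
        rw [h1, h2]
        linear_combination Y v * hij.symm
      rw [hv, zero_mul] at hmain
      exact (mul_eq_zero.1 hmain).resolve_right (hφz i)
    intro i j hij
    apply hφinj
    ext v
    simp only [LinearMap.mem_ker]
    exact ⟨key i j hij v, key j i hij.symm v⟩
  -- the two slope sets
  set s1 : Finset F := Finset.image (fun i : Fin t => -(φ i y) / (φ i z)) Finset.univ with hs1
  set s2 : Finset F := Finset.image (fun a => Z a / Y a) E with hs2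
  have hinj1 : ∀ i ∈ (Finset.univ : Finset (Fin t)), ∀ j ∈ Finset.univ,
      -(φ i y) / (φ i z) = -(φ j y) / (φ j z) → i = j := by
    intro i _ j _ hij
    have h := (div_eq_div_iff (hφz i) (hφz j)).1 hij
    exact hker i j (by linear_combination -h)
  have hinj2 : ∀ a ∈ E, ∀ b ∈ E, Z a / Y a = Z b / Y b → a = b := by
    intro a ha b hb hab
    have h := (div_eq_div_iff (hYE a ha) (hYE b hb)).1 hab
    exact hsec a ha b hb (by linear_combination h)
  have hs1card : s1.card = t := by
    rw [hs1, Finset.card_image_of_injOn hinj1, Finset.card_univ, Fintype.card_fin]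
  have hs2card : s2.card = E.card := by
    rw [hs2, Finset.card_image_of_injOn hinj2]
  have hdisj : Disjoint s1 s2 := by
    rw [Finset.disjoint_left]
    intro c hc1 hc2
    simp only [hs1, hs2, Finset.mem_image, Finset.mem_univ, true_and] at hc1 hc2
    obtain ⟨i, hi⟩ := hc1
    obtain ⟨a, ha, hA⟩ := hc2
    obtain ⟨haA, hay, haz, haS⟩ := hEmem a ha
    rw [← hA] at hi
    have h := (div_eq_div_iff (hφz i) (hYE a ha)).1 hi
    have hia : φ i a = 0 := by
      rw [hexp (φ i) (hφS i) a]
      linear_combination -h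
    exact haS ((hφtan i a haA).1 hia)
  -- cardinality count
  have hT : (insert y (insert z S)).card = k := by
    rw [Finset.card_insert_of_notMem (by simp [hyz, hyS]),
      Finset.card_insert_of_notMem hzS]
    omega
  have hTA : insert y (insert z S) ⊆ A := by
    intro v hv; simp only [Finset.mem_insert] at hv
    rcases hv with rfl | rfl | hv
    exacts [hy, hz, hS hv]
  have hkA : k ≤ A.card := le_trans (le_of_eq hT.symm) (Finset.card_le_card hTA)
  have hEcard : E.card = A.card - k := by
    rw [hE, Finset.card_sdiff_of_subset hTA, hT]
  have hq1 : 1 ≤ Fintype.card F := Fintype.card_pos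
  have hcount : t + E.card = Fintype.card F - 1 := by omega
  -- the union is all of F \ {0}
  have hsub01 : s1 ∪ s2 ⊆ (Finset.univ : Finset F).erase 0 := by
    intro c hc
    rw [Finset.mem_union] at hc
    rw [Finset.mem_erase]
    refine ⟨?_, Finset.mem_univ c⟩
    rcases hc with hc | hc
    · simp only [hs1, Finset.mem_image, Finset.mem_univ, true_and] at hc
      obtain ⟨i, hi⟩ := hc
      rw [← hi]
      exact div_ne_zero (neg_ne_zero.2 (hφy i)) (hφz i)
    · simp only [hs2, Finset.mem_image] at hc
      obtain ⟨a, ha, hA⟩ := hc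
      rw [← hA]
      exact div_ne_zero (hZE a ha) (hYE a ha)
  have hunion : s1 ∪ s2 = (Finset.univ : Finset F).erase 0 := by
    apply Finset.eq_of_subset_of_card_le hsub01
    rw [Finset.card_union_of_disjoint hdisj, hs1card, hs2card,
      Finset.card_erase_of_mem (Finset.mem_univ 0), Finset.card_univ]
    omega
  have hsplit : (∏ c ∈ s1, c) * (∏ c ∈ s2, c) = -1 := by
    rw [← Finset.prod_union hdisj, hunion, prod_erase_zero_eq_neg_one]
  have hp1 : (∏ c ∈ s1, c) = (-1 : F)^t * f y / f z := by
    rw [hs1, Finset.prod_image hinj1]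
    have : ∀ i : Fin t, -(φ i y) / (φ i z) = (-1) * (φ i y / φ i z) := by
      intro i; ring
    rw [Finset.prod_congr rfl (fun i _ => this i), Finset.prod_mul_distrib,
      Finset.prod_div_distrib, Finset.prod_const, Finset.card_univ, Fintype.card_fin,
      hφprod y, hφprod z, mul_div_assoc]
  have hp2 : (∏ c ∈ s2, c) = (∏ a ∈ E, Z a) / (∏ a ∈ E, Y a) := by
    rw [hs2, Finset.prod_image hinj2, Finset.prod_div_distrib]
  have hfz0 : f z ≠ 0 := by
    rw [hφprod z]
    exact Finset.prod_ne_zero_iff.2 fun i _ => hφz i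
  have hPY : (∏ a ∈ E, Y a) ≠ 0 := Finset.prod_ne_zero_iff.2 hYE
  refine ⟨?_, mul_ne_zero hfz0 hPY⟩
  rw [hp1, hp2] at hsplit
  field_simp at hsplit
  linear_combination hsplit

set_option maxHeartbeats 1000000 in
/-- Segre's coordinate-free lemma of tangents: for an arc `𝒜` of
`PG(k-1, q)` of size `q + k - 1 - t`, a `(k-3)`-subset `D` of `𝒜` and distinct
`x, y, z ∈ 𝒜 \ D`,
`f_{D∪x}(y) f_{D∪y}(z) f_{D∪z}(x) = (-1)^{t+1} f_{D∪y}(x) f_{D∪z}(y) f_{D∪x}(z)`. -/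
theorem lemma_of_tangents {F : Type*} [Field F] [Fintype F] [DecidableEq F]
    {k t : ℕ} (hk : 3 ≤ k)
    (A : Finset (Fin k → F))
    (hArc : ∀ s ⊆ A, s.card ≤ k →
      LinearIndependent F (fun v : s => (v : Fin k → F)))
    (hsize : A.card + t = Fintype.card F + k - 1)
    (D : Finset (Fin k → F)) (hD : D ⊆ A) (hDcard : D.card + 3 = k)
    (x y z : Fin k → F) (hx : x ∈ A) (hy : y ∈ A) (hz : z ∈ A)
    (hxD : x ∉ D) (hyD : y ∉ D) (hzD : z ∉ D)
    (hxy : x ≠ y) (hxz : x ≠ z) (hyz : y ≠ z)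
    (fx fy fz : (Fin k → F) → F)
    (hfx : IsTangentForm (t := t) A (insert x D) fx)
    (hfy : IsTangentForm (t := t) A (insert y D) fy)
    (hfz : IsTangentForm (t := t) A (insert z D) fz) :
    fx y * fy z * fz x = (-1 : F) ^ (t + 1) * (fy x * fz y * fx z) := by
  classical
  have hxT : x ∈ insert x (insert y (insert z D)) := by simp
  have hyT : y ∈ insert x (insert y (insert z D)) := by simp
  have hzT : z ∈ insert x (insert y (insert z D)) := by simp
  have hTcard : (insert x (insert y (insert z D))).card = k := by
    rw [Finset.card_insert_of_notMem (by simp [hxy, hxz, hxD]),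
      Finset.card_insert_of_notMem (by simp [hyz, hyD]),
      Finset.card_insert_of_notMem hzD]
    omega
  have hTA : insert x (insert y (insert z D)) ⊆ A := by
    intro v hv; simp only [Finset.mem_insert] at hv
    rcases hv with rfl | rfl | rfl | hv
    exacts [hx, hy, hz, hD hv]
  have hli := hArc _ hTA (le_of_eq hTcard)
  haveI : Nonempty ↥(insert x (insert y (insert z D))) := ⟨⟨x, hxT⟩⟩
  have hcard' : Fintype.card ↥(insert x (insert y (insert z D)))
      = Module.finrank F (Fin k → F) := by
    rw [Fintype.card_coe, hTcard, Module.finrank_fintype_fun_eq_card, Fintype.card_fin]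
  set b := basisOfLinearIndependentOfCardEqFinrank hli hcard' with hbdef
  have hb : ∀ i, b i = (i : Fin k → F) := fun i =>
    congrFun (coe_basisOfLinearIndependentOfCardEqFinrank hli hcard') i
  have hcoord : ∀ (u : Fin k → F) (hu : u ∈ insert x (insert y (insert z D)))
      (v : Fin k → F) (hv : v ∈ insert x (insert y (insert z D))),
      b.coord ⟨u, hu⟩ v = if v = u then 1 else 0 := by
    intro u hu v hv
    conv_lhs => rw [show v = b ⟨v, hv⟩ from (hb ⟨v, hv⟩).symm]
    rw [Module.Basis.coord_apply, Module.Basis.repr_self, Finsupp.single_apply]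
    simp only [Subtype.mk.injEq]
  set X := b.coord ⟨x, hxT⟩ with hXdef
  set Y := b.coord ⟨y, hyT⟩ with hYdef
  set Z := b.coord ⟨z, hzT⟩ with hZdef
  have hXx : X x = 1 := by rw [hXdef, hcoord x hxT x hxT, if_pos rfl]
  have hXy : X y = 0 := by rw [hXdef, hcoord x hxT y hyT, if_neg (Ne.symm hxy)]
  have hXz : X z = 0 := by rw [hXdef, hcoord x hxT z hzT, if_neg (Ne.symm hxz)]
  have hYx : Y x = 0 := by rw [hYdef, hcoord y hyT x hxT, if_neg hxy]
  have hYy : Y y = 1 := by rw [hYdef, hcoord y hyT y hyT, if_pos rfl]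
  have hYz : Y z = 0 := by rw [hYdef, hcoord y hyT z hzT, if_neg (Ne.symm hyz)]
  have hZx : Z x = 0 := by rw [hZdef, hcoord z hzT x hxT, if_neg hxz]
  have hZy : Z y = 0 := by rw [hZdef, hcoord z hzT y hyT, if_neg hyz]
  have hZz : Z z = 1 := by rw [hZdef, hcoord z hzT z hzT, if_pos rfl]
  have hXD : ∀ s ∈ D, X s = 0 := by
    intro s hs
    rw [hXdef, hcoord x hxT s (by simp [hs]), if_neg (by rintro rfl; exact hxD hs)]
  have hYD : ∀ s ∈ D, Y s = 0 := by
    intro s hs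
    rw [hYdef, hcoord y hyT s (by simp [hs]), if_neg (by rintro rfl; exact hyD hs)]
  have hZD : ∀ s ∈ D, Z s = 0 := by
    intro s hs
    rw [hZdef, hcoord z hzT s (by simp [hs]), if_neg (by rintro rfl; exact hzD hs)]
  -- spanning statements
  have hspan1 : ∀ ψ : (Fin k → F) →ₗ[F] F, (∀ s ∈ insert x D, ψ s = 0) →
      ψ = (ψ y) • Y + (ψ z) • Z := by
    intro ψ hψ
    apply b.ext
    intro i
    obtain ⟨v, hv⟩ := i
    rw [hb ⟨v, hv⟩]
    simp only [LinearMap.add_apply, LinearMap.smul_apply, smul_eq_mul]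
    have hv' := hv
    simp only [Finset.mem_insert] at hv'
    rcases hv' with rfl | rfl | rfl | hvD
    · rw [hψ v (Finset.mem_insert_self _ _), hYx, hZx]; ring
    · rw [hYy, hZy]; ring
    · rw [hYz, hZz]; ring
    · rw [hψ v (Finset.mem_insert_of_mem hvD), hYD v hvD, hZD v hvD]; ring
  have hspan2 : ∀ ψ : (Fin k → F) →ₗ[F] F, (∀ s ∈ insert y D, ψ s = 0) →
      ψ = (ψ z) • Z + (ψ x) • X := by
    intro ψ hψ
    apply b.ext
    intro i
    obtain ⟨v, hv⟩ := i
    rw [hb ⟨v, hv⟩]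
    simp only [LinearMap.add_apply, LinearMap.smul_apply, smul_eq_mul]
    have hv' := hv
    simp only [Finset.mem_insert] at hv'
    rcases hv' with rfl | rfl | rfl | hvD
    · rw [hZx, hXx]; ring
    · rw [hψ v (Finset.mem_insert_self _ _), hZy, hXy]; ring
    · rw [hZz, hXz]; ring
    · rw [hψ v (Finset.mem_insert_of_mem hvD), hZD v hvD, hXD v hvD]; ring
  have hspan3 : ∀ ψ : (Fin k → F) →ₗ[F] F, (∀ s ∈ insert z D, ψ s = 0) →
      ψ = (ψ x) • X + (ψ y) • Y := by
    intro ψ hψ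
    apply b.ext
    intro i
    obtain ⟨v, hv⟩ := i
    rw [hb ⟨v, hv⟩]
    simp only [LinearMap.add_apply, LinearMap.smul_apply, smul_eq_mul]
    have hv' := hv
    simp only [Finset.mem_insert] at hv'
    rcases hv' with rfl | rfl | rfl | hvD
    · rw [hXx, hYx]; ring
    · rw [hXy, hYy]; ring
    · rw [hψ v (Finset.mem_insert_self _ _), hXz, hYz]; ring
    · rw [hψ v (Finset.mem_insert_of_mem hvD), hXD v hvD, hYD v hvD]; ring
  -- the three instances of the key lemma
  have hS1A : insert x D ⊆ A := by
    intro v hv; rcases Finset.mem_insert.1 hv with rfl | h; exacts [hx, hD h]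
  have hS2A : insert y D ⊆ A := by
    intro v hv; rcases Finset.mem_insert.1 hv with rfl | h; exacts [hy, hD h]
  have hS3A : insert z D ⊆ A := by
    intro v hv; rcases Finset.mem_insert.1 hv with rfl | h; exacts [hz, hD h]
  have hS1card : (insert x D).card + 2 = k := by
    rw [Finset.card_insert_of_notMem hxD]; omega
  have hS2card : (insert y D).card + 2 = k := by
    rw [Finset.card_insert_of_notMem hyD]; omega
  have hS3card : (insert z D).card + 2 = k := by
    rw [Finset.card_insert_of_notMem hzD]; omega
  have hyS1 : y ∉ insert x D := by simp [Ne.symm hxy, hyD]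
  have hzS1 : z ∉ insert x D := by simp [Ne.symm hxz, hzD]
  have hzS2 : z ∉ insert y D := by simp [Ne.symm hyz, hzD]
  have hxS2 : x ∉ insert y D := by simp [hxy, hxD]
  have hxS3 : x ∉ insert z D := by simp [hxz, hxD]
  have hyS3 : y ∉ insert z D := by simp [hyz, hyD]
  have hYS1 : ∀ s ∈ insert x D, Y s = 0 := by
    intro s hs; rcases Finset.mem_insert.1 hs with rfl | h; exacts [hYx, hYD s h]
  have hZS1 : ∀ s ∈ insert x D, Z s = 0 := by
    intro s hs; rcases Finset.mem_insert.1 hs with rfl | h; exacts [hZx, hZD s h]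
  have hZS2 : ∀ s ∈ insert y D, Z s = 0 := by
    intro s hs; rcases Finset.mem_insert.1 hs with rfl | h; exacts [hZy, hZD s h]
  have hXS2 : ∀ s ∈ insert y D, X s = 0 := by
    intro s hs; rcases Finset.mem_insert.1 hs with rfl | h; exacts [hXy, hXD s h]
  have hXS3 : ∀ s ∈ insert z D, X s = 0 := by
    intro s hs; rcases Finset.mem_insert.1 hs with rfl | h; exacts [hXz, hXD s h]
  have hYS3 : ∀ s ∈ insert z D, Y s = 0 := by
    intro s hs; rcases Finset.mem_insert.1 hs with rfl | h; exacts [hYz, hYD s h]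
  obtain ⟨eq1, ne1⟩ := segre_aux A hArc hsize (insert x D) hS1A hS1card
    y z hy hz hyS1 hzS1 hyz Y Z hYy hZz hYz hZy hYS1 hZS1 hspan1 fx hfx
  obtain ⟨eq2, ne2⟩ := segre_aux A hArc hsize (insert y D) hS2A hS2card
    z x hz hx hzS2 hxS2 (Ne.symm hxz) Z X hZz hXx hZx hXz hZS2 hXS2 hspan2 fy hfy
  obtain ⟨eq3, ne3⟩ := segre_aux A hArc hsize (insert z D) hS3A hS3card
    x y hx hy hxS3 hyS3 hxy X Y hXx hYy hXy hYx hXS3 hYS3 hspan3 fz hfz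
  have hs21 : insert z (insert x (insert y D)) = insert y (insert z (insert x D)) := by
    ext v
    simp only [Finset.mem_insert]
    tauto
  have hs31 : insert x (insert y (insert z D)) = insert y (insert z (insert x D)) := by
    ext v
    simp only [Finset.mem_insert]
    tauto
  have hE21 : A \ insert z (insert x (insert y D)) = A \ insert y (insert z (insert x D)) := by
    rw [hs21]
  have hE31 : A \ insert x (insert y (insert z D)) = A \ insert y (insert z (insert x D)) := by
    rw [hs31]
  rw [hE21] at eq2 ne2
  rw [hE31] at eq3 ne3
  set E := A \ insert y (insert z (insert x D)) with hEdef
  set P := ∏ a ∈ E, X a with hP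
  set Q := ∏ a ∈ E, Y a with hQ
  set R := ∏ a ∈ E, Z a with hR
  have hP0 : P ≠ 0 := right_ne_zero_of_mul ne3
  have hQ0 : Q ≠ 0 := right_ne_zero_of_mul ne1
  have hR0 : R ≠ 0 := right_ne_zero_of_mul ne2
  have hε : ((-1 : F)^t) * ((-1 : F)^t) = 1 := by
    rw [← pow_add]
    exact Even.neg_one_pow ⟨t, rfl⟩
  apply mul_right_cancel₀ (mul_ne_zero (mul_ne_zero hP0 hQ0) hR0)
  have hm : ((-1 : F)^t * fx y * R) * (((-1 : F)^t * fy z * P) * ((-1 : F)^t * fz x * Q))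
      = (-(fx z * Q)) * ((-(fy x * R)) * (-(fz y * P))) := by
    rw [eq1, eq2, eq3]
  rw [pow_succ]
  linear_combination ((-1 : F)^t) * hm
    - (((-1 : F)^t * (-1 : F)^t + 1) * (fx y * fy z * fz x * (P * Q * R))) * hε
end

section
/- Segre's theorem: if q is odd, then every arc of size q+1 in PG(2, q) is a conic, i.e., the zero set of a nondegenerate quadratic form on F_q^3. -/
open Finset Matrix
open scoped LinearAlgebra.Projectivization

section

variable {F : Type*} [Field F]

lemma FiniteField.prod_univ_erase_zero [Fintype F] [DecidableEq F] :
    ∏ x ∈ univ.erase (0 : F), x = -1 := by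
  have := congrArg Units.val (FiniteField.prod_univ_units_id_eq_neg_one (K := F))
  rw [Units.coe_prod, Units.val_neg, Units.val_one] at this
  rw [← this]
  refine prod_bij' (fun x hx => Units.mk0 x (ne_of_mem_erase hx)) (fun u _ => (u : F))
    ?_ ?_ ?_ ?_ ?_ <;> simp

lemma FiniteField.mul_prod_erase_eq_neg_one [Fintype F] {ι : Type*} [DecidableEq ι]
    {s : Finset ι} {g : ι → F} (hg : Set.InjOn g s) (hcard : #s + 1 = Fintype.card F)
    {i₀ : ι} (hi₀ : i₀ ∈ s) (hgi₀ : g i₀ = 0) {m : F} (hm : ∀ i ∈ s, g i ≠ m) :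
    m * ∏ i ∈ s.erase i₀, g i = -1 := by
  classical
  have hm0 : m ≠ 0 := hgi₀ ▸ (hm i₀ hi₀).symm
  have hinj : Set.InjOn g (s.erase i₀) := hg.mono (erase_subset _ _)
  have hm_notMem : m ∉ (s.erase i₀).image g := by
    simp only [mem_image, not_exists, not_and]
    exact fun i hi => hm i (mem_of_mem_erase hi)
  have himage : insert m ((s.erase i₀).image g) = univ.erase 0 := by
    refine eq_of_subset_of_card_le (fun x hx => ?_) ?_
    · obtain rfl | ⟨i, hi, rfl⟩ : x = m ∨ ∃ i ∈ s.erase i₀, g i = x := by simpa using hx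
      · simpa using hm0
      · rw [← hgi₀]
        exact mem_erase.2 ⟨fun h => ne_of_mem_erase hi (hg (mem_of_mem_erase hi) hi₀ h),
          mem_univ _⟩
    · rw [card_insert_of_notMem hm_notMem, card_image_of_injOn hinj, card_erase_of_mem hi₀,
        card_erase_of_mem (mem_univ _), card_univ]
      omega
  rw [← FiniteField.prod_univ_erase_zero, ← himage, prod_insert hm_notMem, prod_image hinj]

lemma FiniteField.two_ne_zero_of_odd_card [Fintype F] (hodd : Odd (Fintype.card F)) :
    (2 : F) ≠ 0 :=
  Ring.two_ne_zero fun h => by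
    have := FiniteField.even_card_iff_char_two.1 h
    rw [Nat.odd_iff] at hodd
    omega

lemma Finset.card_sdiff_pair_add_two {α : Type*} [DecidableEq α] {s : Finset α} {a b : α}
    (ha : a ∈ s) (hb : b ∈ s) (hab : a ≠ b) : #(s \ {a, b}) + 2 = #s := by
  rw [card_sdiff_of_subset (by simp [insert_subset_iff, ha, hb]), card_pair hab]
  have : 2 ≤ #s := card_pair hab ▸ card_le_card (by simp [insert_subset_iff, ha, hb])
  omega

/-- Cramer's rule in the frame `a, b, c`, read through the linear form `t ⬝ᵥ ·`. -/
lemma cross_dotProduct_mul_dotProduct (a b c t v : Fin 3 → F) :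
    (a ⨯₃ b ⬝ᵥ c) * (t ⬝ᵥ v) = (t ⬝ᵥ a) * (b ⨯₃ c ⬝ᵥ v) + (t ⬝ᵥ b) * (c ⨯₃ a ⬝ᵥ v)
      + (t ⬝ᵥ c) * (a ⨯₃ b ⬝ᵥ v) := by
  simp only [dotProduct, cross_apply, Fin.sum_univ_three, cons_val_zero, cons_val_one,
    Matrix.cons_val]
  ring

lemma cross_dotProduct_plucker (p q r e e' : Fin 3 → F) :
    (p ⨯₃ q ⬝ᵥ e) * (p ⨯₃ r ⬝ᵥ e') - (p ⨯₃ q ⬝ᵥ e') * (p ⨯₃ r ⬝ᵥ e)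
      = (p ⨯₃ q ⬝ᵥ r) * (p ⨯₃ e ⬝ᵥ e') := by
  simp only [dotProduct, cross_apply, Fin.sum_univ_three, cons_val_zero, cons_val_one,
    Matrix.cons_val]
  ring

lemma det_of_cross_middle (t c a s : Fin 3 → F) :
    (Matrix.of ![t, c ⨯₃ a, s]).det = (s ⬝ᵥ c) * (t ⬝ᵥ a) - (t ⬝ᵥ c) * (s ⬝ᵥ a) := by
  simp only [det_fin_three, of_apply, cross_apply, dotProduct, Fin.sum_univ_three, cons_val',
    cons_val_zero, cons_val_fin_one, cons_val_one, Matrix.cons_val]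
  ring

lemma conic_of_tangent_triangles {a b c d ta tb tc td : Fin 3 → F} (hta : ta ⬝ᵥ a = 0)
    (htb : tb ⬝ᵥ b = 0) (htc : tc ⬝ᵥ c = 0) (htd : td ⬝ᵥ d = 0)
    (habc : (ta ⬝ᵥ b) * (tb ⬝ᵥ c) * (tc ⬝ᵥ a) = (ta ⬝ᵥ c) * (tb ⬝ᵥ a) * (tc ⬝ᵥ b))
    (habd : (ta ⬝ᵥ b) * (tb ⬝ᵥ d) * (td ⬝ᵥ a) = (ta ⬝ᵥ d) * (tb ⬝ᵥ a) * (td ⬝ᵥ b))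
    (hacd : (ta ⬝ᵥ c) * (tc ⬝ᵥ d) * (td ⬝ᵥ a) = (ta ⬝ᵥ d) * (tc ⬝ᵥ a) * (td ⬝ᵥ c))
    (h2 : (2 : F) ≠ 0) (htba : tb ⬝ᵥ a ≠ 0) (htda : td ⬝ᵥ a ≠ 0) :
    (c ⨯₃ a ⬝ᵥ b) ^ 2 * ((ta ⬝ᵥ d) * (tc ⬝ᵥ d))
      = (ta ⬝ᵥ b) * (tc ⬝ᵥ b) * (c ⨯₃ a ⬝ᵥ d) ^ 2 := by
  have hΔ : c ⨯₃ a ⬝ᵥ b = a ⨯₃ b ⬝ᵥ c := by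
    rw [dotProduct_comm, triple_product_permutation, dotProduct_comm]
  -- the coordinates of `d` in the frame `a, b, c`
  set α := b ⨯₃ c ⬝ᵥ d
  set β := c ⨯₃ a ⬝ᵥ d
  set γ := a ⨯₃ b ⬝ᵥ d
  have ha := cross_dotProduct_mul_dotProduct a b c ta d
  have hb := cross_dotProduct_mul_dotProduct a b c tb d
  have hc := cross_dotProduct_mul_dotProduct a b c tc d
  have hd := cross_dotProduct_mul_dotProduct a b c td d
  rw [hta] at ha
  rw [htb] at hb
  rw [htc] at hc
  rw [htd] at hd
  set G := (ta ⬝ᵥ b) * (tc ⬝ᵥ a) * α * β + (ta ⬝ᵥ c) * (tc ⬝ᵥ a) * α * γ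
    + (ta ⬝ᵥ c) * (tc ⬝ᵥ b) * β * γ
  -- `td ⬝ᵥ d = 0` is `hd`; `habd` and `hacd` eliminate `td`, then `habc` eliminates `tb`
  have hG : (td ⬝ᵥ a) * (tb ⬝ᵥ a) * (2 * G) = 0 := by
    linear_combination -(a ⨯₃ b ⬝ᵥ c) * (ta ⬝ᵥ d) * (tc ⬝ᵥ a) * (tb ⬝ᵥ a) * hd
      + β * (a ⨯₃ b ⬝ᵥ c) * (tc ⬝ᵥ a) * habd + γ * (a ⨯₃ b ⬝ᵥ c) * (tb ⬝ᵥ a) * hacd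
      - (td ⬝ᵥ a) * (α * (tc ⬝ᵥ a) * (tb ⬝ᵥ a) * ha + β * (tc ⬝ᵥ a) * (ta ⬝ᵥ b) * hb
        + γ * (tb ⬝ᵥ a) * (ta ⬝ᵥ c) * hc + β * γ * habc)
  replace hG : G = 0 := by simpa [htda, htba, h2] using hG
  rw [hΔ]
  linear_combination hG + (a ⨯₃ b ⬝ᵥ c) * (tc ⬝ᵥ d) * ha + ((ta ⬝ᵥ b) * β + (ta ⬝ᵥ c) * γ) * hc

noncomputable def stdConic (k : F) : QuadraticForm F (Fin 3 → F) :=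
  QuadraticMap.proj 0 2 - k • QuadraticMap.proj 1 1

lemma stdConic_apply (k : F) (w : Fin 3 → F) : stdConic k w = w 0 * w 2 - k * (w 1 * w 1) := by
  simp [stdConic, QuadraticMap.proj_apply]

lemma stdConic_mulVec (k : F) (u v w x : Fin 3 → F) :
    stdConic k (Matrix.of ![u, v, w] *ᵥ x) = (u ⬝ᵥ x) * (w ⬝ᵥ x) - k * ((v ⬝ᵥ x) * (v ⬝ᵥ x)) := by
  simp [stdConic_apply]

lemma polar_stdConic (k : F) (z w : Fin 3 → F) :
    QuadraticMap.polar (stdConic k) z w = z 0 * w 2 + z 2 * w 0 - 2 * k * (z 1 * w 1) := by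
  simp only [QuadraticMap.polar, stdConic_apply, Pi.add_apply]
  ring

lemma exists_polar_stdConic_comp_ne_zero {k : F} (hk : k ≠ 0) (h2 : (2 : F) ≠ 0)
    {L : (Fin 3 → F) →ₗ[F] (Fin 3 → F)} (hL : Function.Bijective L) {y : Fin 3 → F}
    (hy : y ≠ 0) : ∃ x, QuadraticMap.polar ((stdConic k).comp L) x y ≠ 0 := by
  suffices ∃ z, QuadraticMap.polar (stdConic k) z (L y) ≠ 0 by
    obtain ⟨z, hz⟩ := this
    obtain ⟨x, rfl⟩ := hL.2 z
    exact ⟨x, by simpa [QuadraticMap.polar] using hz⟩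
  by_contra! h
  refine hy (hL.1 ?_)
  ext i
  rw [map_zero]
  fin_cases i
  · simpa [polar_stdConic] using h (Pi.single 2 1)
  · simpa [polar_stdConic, hk, h2] using h (Pi.single 1 1)
  · simpa [polar_stdConic] using h (Pi.single 0 1)

/-- The parametrisation of the conic `x₀ x₂ = k x₁²` by the projective line `Option F`. -/
def stdConicPoint (k : F) : Option F → Fin 3 → F
  | none => ![0, 0, 1]
  | some x => ![1, x, k * x ^ 2]

open Classical in
noncomputable def stdConicChart (w : Fin 3 → F) : Option F :=
  if w 0 = 0 then none else some (w 1 / w 0)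

lemma exists_eq_smul_stdConicPoint {k : F} (hk : k ≠ 0) {w : Fin 3 → F}
    (hw : stdConic k w = 0) : ∃ s : F, w = s • stdConicPoint k (stdConicChart w) := by
  rw [stdConic_apply] at hw
  unfold stdConicChart
  split_ifs with h0
  · have h1 : w 1 = 0 := by simpa [h0, hk] using hw
    refine ⟨w 2, ?_⟩
    ext i
    fin_cases i <;> simp [stdConicPoint, h0, h1]
  · refine ⟨w 0, ?_⟩
    ext i
    fin_cases i
    · simp [stdConicPoint]
    · simp only [Fin.mk_one, stdConicPoint, Pi.smul_apply, cons_val_one, cons_val_zero,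
        smul_eq_mul]
      field_simp
    · simp only [Fin.reduceFinMk, stdConicPoint, Pi.smul_apply, Matrix.cons_val, smul_eq_mul]
      field_simp
      linear_combination hw

lemma ncard_stdConic_comp_le [Fintype F] {k : F} (hk : k ≠ 0)
    {L : (Fin 3 → F) →ₗ[F] (Fin 3 → F)} (hL : Function.Injective L) :
    {p : ℙ F (Fin 3 → F) | (stdConic k).comp L p.rep = 0}.ncard ≤ Fintype.card F + 1 := by
  calc _ ≤ (Set.univ : Set (Option F)).ncard := by
        refine Set.ncard_le_ncard_of_injOn (fun p => stdConicChart (L p.rep))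
          (fun _ _ => trivial) (fun p hp p' hp' h => ?_)
        obtain ⟨s, hs⟩ := exists_eq_smul_stdConicPoint hk hp
        obtain ⟨s', hs'⟩ := exists_eq_smul_stdConicPoint hk hp'
        simp only at h
        rw [h] at hs
        generalize stdConicPoint k (stdConicChart (L p'.rep)) = u at hs hs'
        have hs'0 : s' ≠ 0 := by
          rintro rfl
          rw [zero_smul, ← map_zero L] at hs'
          exact p'.rep_nonzero (hL hs')
        have hpp' : (s / s') • p'.rep = p.rep :=
          hL (by rw [map_smul, hs, hs', smul_smul, div_mul_cancel₀ _ hs'0])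
        rw [← p.mk_rep, ← p'.mk_rep, Projectivization.mk_eq_mk_iff']
        exact ⟨s / s', hpp'⟩
    _ = Fintype.card F + 1 := by simp [Set.ncard_univ]

lemma IsArcIn.cross_dotProduct_ne_zero {A : Set (ℙ F (Fin 3 → F))} (hA : IsArcIn F 3 A)
    {p q r : ℙ F (Fin 3 → F)} (hp : p ∈ A) (hq : q ∈ A) (hr : r ∈ A)
    (hpq : p ≠ q) (hpr : p ≠ r) (hqr : q ≠ r) : p.rep ⨯₃ q.rep ⬝ᵥ r.rep ≠ 0 := by
  have hinj : Function.Injective ![p, q, r] := by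
    intro i j hij
    fin_cases i <;> fin_cases j <;> simp_all [eq_comm]
  have hind := Projectivization.independent_iff.1 (hA _ hinj (by simp [Fin.forall_fin_succ, *]))
  have hdet : (Matrix.of ![p.rep, q.rep, r.rep]).det ≠ 0 := by
    have hrows : (fun i => Matrix.of ![p.rep, q.rep, r.rep] i)
        = Projectivization.rep ∘ ![p, q, r] := by
      ext i : 1
      fin_cases i <;> rfl
    rw [← hrows] at hind
    exact ((Matrix.isUnit_iff_isUnit_det _).1
      (Matrix.linearIndependent_rows_iff_isUnit.1 hind)).ne_zero
  rwa [dotProduct_comm, triple_product_permutation, triple_product_eq_det]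

/-- The line `pe` is `{x | (p ⨯₃ q - σ • p ⨯₃ r) ⬝ᵥ x = 0}` for `σ = pencilSlope p q r e`: this is
the affine coordinate of `pe` in the pencil of lines through `p` spanned by `pq` and `pr`. -/
noncomputable def pencilSlope (p q r e : ℙ F (Fin 3 → F)) : F :=
  (p.rep ⨯₃ q.rep ⬝ᵥ e.rep) / (p.rep ⨯₃ r.rep ⬝ᵥ e.rep)

lemma pencilSlope_mul_pencilSlope_mul_pencilSlope {a b c e : ℙ F (Fin 3 → F)}
    (hab : a.rep ⨯₃ b.rep ⬝ᵥ e.rep ≠ 0) (hbc : b.rep ⨯₃ c.rep ⬝ᵥ e.rep ≠ 0)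
    (hca : c.rep ⨯₃ a.rep ⬝ᵥ e.rep ≠ 0) :
    pencilSlope a b c e * pencilSlope b c a e * pencilSlope c a b e = -1 := by
  simp only [pencilSlope, ← cross_anticomm c.rep a.rep, ← cross_anticomm a.rep b.rep,
    ← cross_anticomm b.rep c.rep, neg_dotProduct]
  field_simp

/-- The line `{x | t ⬝ᵥ x = 0}` passes through `p` and meets `A` in no other point. -/
def IsTangent (A : Finset (ℙ F (Fin 3 → F))) (p : ℙ F (Fin 3 → F)) (t : Fin 3 → F) : Prop :=
  t ⬝ᵥ p.rep = 0 ∧ ∀ e ∈ A, e ≠ p → t ⬝ᵥ e.rep ≠ 0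

namespace IsArcIn

open scoped Classical

variable {A : Finset (ℙ F (Fin 3 → F))} {p q r : ℙ F (Fin 3 → F)}

lemma injOn_pencilSlope (hA : IsArcIn F 3 ↑A) (hp : p ∈ A) (hq : q ∈ A) (hr : r ∈ A)
    (hpq : p ≠ q) (hpr : p ≠ r) (hqr : q ≠ r) :
    Set.InjOn (pencilSlope p q r) ↑(A \ {p, r}) := by
  intro e he e' he' h
  simp only [coe_sdiff, Set.mem_sdiff, mem_coe, Set.mem_insert_iff, Set.mem_singleton_iff,
    not_or, coe_insert, coe_singleton] at he he'
  by_contra hne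
  rw [pencilSlope, pencilSlope, div_eq_div_iff
    (hA.cross_dotProduct_ne_zero hp hr he.1 hpr (Ne.symm he.2.1) (Ne.symm he.2.2))
    (hA.cross_dotProduct_ne_zero hp hr he'.1 hpr (Ne.symm he'.2.1) (Ne.symm he'.2.2))] at h
  have hplucker := cross_dotProduct_plucker p.rep q.rep r.rep e.rep e'.rep
  rw [h, sub_self, eq_comm, mul_eq_zero] at hplucker
  rcases hplucker with h | h
  · exact hA.cross_dotProduct_ne_zero hp hq hr hpq hpr hqr h
  · exact hA.cross_dotProduct_ne_zero hp he.1 he'.1 (Ne.symm he.2.1) (Ne.symm he'.2.1) hne h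

lemma exists_isTangent [Fintype F] (hA : IsArcIn F 3 ↑A) (hcard : #A = Fintype.card F + 1)
    (hp : p ∈ A) : ∃ t, IsTangent A p t := by
  obtain ⟨q, hq, r, hr, hqr⟩ : ∃ q ∈ A.erase p, ∃ r ∈ A.erase p, q ≠ r := by
    rw [← one_lt_card, card_erase_of_mem hp, hcard]
    simpa using Fintype.one_lt_card (α := F)
  obtain ⟨hqp, hq⟩ := mem_erase.1 hq
  obtain ⟨hrp, hr⟩ := mem_erase.1 hr
  have hlt : #((A \ {p, r}).image (pencilSlope p q r)) < #(univ : Finset F) := by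
    rw [card_image_of_injOn (hA.injOn_pencilSlope hp hq hr hqp.symm hrp.symm hqr), card_univ]
    have := card_sdiff_pair_add_two hp hr hrp.symm
    omega
  obtain ⟨m, -, hm⟩ := exists_mem_notMem_of_card_lt_card hlt
  refine ⟨p.rep ⨯₃ q.rep - m • p.rep ⨯₃ r.rep, ?_, fun e he hep => ?_⟩
  · simp [dotProduct_comm _ p.rep, dot_self_cross]
  by_cases her : e = r
  · subst her
    simpa [sub_dotProduct, dotProduct_comm _ e.rep, dot_self_cross] using
      hA.cross_dotProduct_ne_zero hp hq hr hqp.symm hrp.symm hqr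
  · have hden := hA.cross_dotProduct_ne_zero hp hr he hrp.symm (Ne.symm hep) (Ne.symm her)
    rw [sub_dotProduct, smul_dotProduct, smul_eq_mul, sub_ne_zero]
    exact fun h => hm (mem_image.2 ⟨e, by simp [he, hep, her],
      by rw [pencilSlope, h, mul_div_cancel_right₀ _ hden]⟩)

lemma pencilSlope_ne_of_isTangent (hA : IsArcIn F 3 ↑A) {t : Fin 3 → F} (ht : IsTangent A p t)
    (hp : p ∈ A) (hq : q ∈ A) (hr : r ∈ A) (hpq : p ≠ q) (hpr : p ≠ r) (hqr : q ≠ r)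
    {e : ℙ F (Fin 3 → F)} (he : e ∈ A \ {p, r}) :
    pencilSlope p q r e ≠ (t ⬝ᵥ q.rep) / (t ⬝ᵥ r.rep) := by
  simp only [mem_sdiff, mem_insert, mem_singleton, not_or] at he
  obtain ⟨he, hep, her⟩ := he
  have hΔ := hA.cross_dotProduct_ne_zero hp hq hr hpq hpr hqr
  have hden := hA.cross_dotProduct_ne_zero hp hr he hpr (Ne.symm hep) (Ne.symm her)
  have htr := ht.2 r hr (Ne.symm hpr)
  have hcramer := cross_dotProduct_mul_dotProduct p.rep q.rep r.rep t e.rep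
  rw [ht.1, ← cross_anticomm p.rep r.rep, neg_dotProduct] at hcramer
  intro h
  rw [pencilSlope, div_eq_div_iff hden htr] at h
  refine ht.2 e he hep (mul_left_cancel₀ hΔ ?_)
  linear_combination hcramer + h

lemma isTangent_dotProduct_mul_prod_pencilSlope [Fintype F] (hA : IsArcIn F 3 ↑A)
    (hcard : #A = Fintype.card F + 1) {t : Fin 3 → F} (ht : IsTangent A p t)
    (hp : p ∈ A) (hq : q ∈ A) (hr : r ∈ A) (hpq : p ≠ q) (hpr : p ≠ r) (hqr : q ≠ r) :
    (t ⬝ᵥ q.rep) * ∏ e ∈ A \ {p, q, r}, pencilSlope p q r e = -(t ⬝ᵥ r.rep) := by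
  have hwilson := FiniteField.mul_prod_erase_eq_neg_one
    (hA.injOn_pencilSlope hp hq hr hpq hpr hqr)
    (by have := card_sdiff_pair_add_two hp hr hpr; omega)
    (by simp [hq, Ne.symm hpq, hqr] : q ∈ A \ {p, r})
    (by simp [pencilSlope, dotProduct_comm _ q.rep, dot_cross_self])
    (fun e he => hA.pencilSlope_ne_of_isTangent ht hp hq hr hpq hpr hqr he)
  have hD : (A \ {p, r}).erase q = A \ {p, q, r} := by
    ext e
    simp only [mem_erase, mem_sdiff, mem_insert, mem_singleton]
    tauto
  rw [hD, div_mul_eq_mul_div, div_eq_iff (ht.2 r hr (Ne.symm hpr))] at hwilson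
  linear_combination hwilson

/-- Segre's lemma of tangents. -/
lemma isTangent_triangle [Fintype F] (hA : IsArcIn F 3 ↑A) (hcard : #A = Fintype.card F + 1)
    (hodd : Odd (Fintype.card F)) {a b c : ℙ F (Fin 3 → F)} (ha : a ∈ A) (hb : b ∈ A)
    (hc : c ∈ A) (hab : a ≠ b) (hac : a ≠ c) (hbc : b ≠ c) {ta tb tc : Fin 3 → F}
    (hta : IsTangent A a ta) (htb : IsTangent A b tb) (htc : IsTangent A c tc) :
    (ta ⬝ᵥ b.rep) * (tb ⬝ᵥ c.rep) * (tc ⬝ᵥ a.rep)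
      = (ta ⬝ᵥ c.rep) * (tb ⬝ᵥ a.rep) * (tc ⬝ᵥ b.rep) := by
  have h₁ := hA.isTangent_dotProduct_mul_prod_pencilSlope hcard hta ha hb hc hab hac hbc
  have h₂ := hA.isTangent_dotProduct_mul_prod_pencilSlope hcard htb hb hc ha hbc hab.symm
    hac.symm
  have h₃ := hA.isTangent_dotProduct_mul_prod_pencilSlope hcard htc hc ha hb hac.symm hbc.symm
    hab
  rw [show ({b, c, a} : Finset _) = {a, b, c} by ext; simp only [mem_insert, mem_singleton]; tauto]
    at h₂
  rw [show ({c, a, b} : Finset _) = {a, b, c} by ext; simp only [mem_insert, mem_singleton]; tauto]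
    at h₃
  set D := A \ {a, b, c}
  have hcyclic : ∀ e ∈ D,
      pencilSlope a b c e * pencilSlope b c a e * pencilSlope c a b e = -1 := by
    intro e he
    simp only [D, mem_sdiff, mem_insert, mem_singleton, not_or] at he
    obtain ⟨he, hea, heb, hec⟩ := he
    exact pencilSlope_mul_pencilSlope_mul_pencilSlope
      (hA.cross_dotProduct_ne_zero ha hb he hab (Ne.symm hea) (Ne.symm heb))
      (hA.cross_dotProduct_ne_zero hb hc he hbc (Ne.symm heb) (Ne.symm hec))
      (hA.cross_dotProduct_ne_zero hc ha he hac.symm (Ne.symm hec) (Ne.symm hea))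
  have hoddD : Odd #D := by
    rw [card_sdiff_of_subset (by simp [insert_subset_iff, ha, hb, hc]),
      card_insert_of_notMem (by simp [hab, hac]), card_pair hbc, hcard]
    convert Nat.Odd.sub_even Fintype.one_lt_card hodd even_two using 1
    omega
  have hprod : (∏ e ∈ D, pencilSlope a b c e) * (∏ e ∈ D, pencilSlope b c a e)
      * (∏ e ∈ D, pencilSlope c a b e) = -1 := by
    rw [← prod_mul_distrib, ← prod_mul_distrib, prod_congr rfl hcyclic, prod_const,
      hoddD.neg_one_pow]
  linear_combination (ta ⬝ᵥ b.rep * (tb ⬝ᵥ c.rep) * (tc ⬝ᵥ a.rep)) * hprod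
    - ((tb ⬝ᵥ c.rep) * (∏ e ∈ D, pencilSlope b c a e) * (tc ⬝ᵥ a.rep)
      * (∏ e ∈ D, pencilSlope c a b e)) * h₁
    + ((ta ⬝ᵥ c.rep) * (tc ⬝ᵥ a.rep) * (∏ e ∈ D, pencilSlope c a b e)) * h₂
    - ((ta ⬝ᵥ c.rep) * (tb ⬝ᵥ a.rep)) * h₃

lemma conic_of_isTangent [Fintype F] (hA : IsArcIn F 3 ↑A) (hcard : #A = Fintype.card F + 1)
    (hodd : Odd (Fintype.card F)) {a b c d : ℙ F (Fin 3 → F)} (ha : a ∈ A) (hb : b ∈ A)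
    (hc : c ∈ A) (hd : d ∈ A) (hab : a ≠ b) (hac : a ≠ c) (hbc : b ≠ c) {ta tc : Fin 3 → F}
    (hta : IsTangent A a ta) (htc : IsTangent A c tc) :
    (c.rep ⨯₃ a.rep ⬝ᵥ b.rep) ^ 2 * ((ta ⬝ᵥ d.rep) * (tc ⬝ᵥ d.rep))
      = (ta ⬝ᵥ b.rep) * (tc ⬝ᵥ b.rep) * (c.rep ⨯₃ a.rep ⬝ᵥ d.rep) ^ 2 := by
  rcases eq_or_ne d a with rfl | hda
  · simp [hta.1, dotProduct_comm _ d.rep, dot_cross_self]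
  rcases eq_or_ne d b with rfl | hdb
  · ring
  rcases eq_or_ne d c with rfl | hdc
  · simp [htc.1, dotProduct_comm _ d.rep, dot_self_cross]
  obtain ⟨tb, htb⟩ := hA.exists_isTangent hcard hb
  obtain ⟨td, htd⟩ := hA.exists_isTangent hcard hd
  exact conic_of_tangent_triangles hta.1 htb.1 htc.1 htd.1
    (hA.isTangent_triangle hcard hodd ha hb hc hab hac hbc hta htb htc)
    (hA.isTangent_triangle hcard hodd ha hb hd hab hda.symm hdb.symm hta htb htd)
    (hA.isTangent_triangle hcard hodd ha hc hd hac hda.symm hdc.symm hta htc htd)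
    (FiniteField.two_ne_zero_of_odd_card hodd) (htb.2 a ha hab) (htd.2 a ha hda.symm)

end IsArcIn

end

/-- Segre's theorem: for `q` odd, every arc of size `q+1` in `PG(2, q)`
is a conic, i.e. the zero set of a nondegenerate quadratic form on `F_q³`. -/
theorem segre_arc_is_conic {F : Type*} [Field F] [Fintype F]
    (hq : Odd (Fintype.card F))
    (A : Set (Projectivization F (Fin 3 → F))) (hA : IsArcIn F 3 A)
    (hcard : A.ncard = Fintype.card F + 1) :
    ∃ Q : QuadraticForm F (Fin 3 → F),
      (∀ y : Fin 3 → F, y ≠ 0 → Q y = 0 → ∃ x, QuadraticMap.polar (⇑Q) x y ≠ 0) ∧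
      A = {p | Q p.rep = 0} := by
  classical
  lift A to Finset (ℙ F (Fin 3 → F)) using A.toFinite
  rw [Set.ncard_coe_finset] at hcard
  obtain ⟨a, ha, b, hb, c, hc, hab, hac, hbc⟩ :=
    Finset.two_lt_card.1 (by have := Fintype.one_lt_card (α := F); omega : 2 < #A)
  obtain ⟨ta, hta⟩ := hA.exists_isTangent hcard ha
  obtain ⟨tc, htc⟩ := hA.exists_isTangent hcard hc
  set M := Matrix.of ![ta, c.rep ⨯₃ a.rep, tc]
  set k := (ta ⬝ᵥ b.rep) * (tc ⬝ᵥ b.rep) / (c.rep ⨯₃ a.rep ⬝ᵥ b.rep) ^ 2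
  have hM : IsUnit M := by
    rw [Matrix.isUnit_iff_isUnit_det, det_of_cross_middle, hta.1, htc.1, isUnit_iff_ne_zero]
    simpa using And.intro (hta.2 c hc hac.symm) (htc.2 a ha hac)
  have hcab := hA.cross_dotProduct_ne_zero hc ha hb hac.symm hbc.symm hab
  have hk : k ≠ 0 :=
    div_ne_zero (mul_ne_zero (hta.2 b hb hab.symm) (htc.2 b hb hbc)) (pow_ne_zero 2 hcab)
  refine ⟨(stdConic k).comp M.mulVecLin, fun y hy _ => exists_polar_stdConic_comp_ne_zero hk
    (FiniteField.two_ne_zero_of_odd_card hq)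
    ⟨Matrix.mulVec_injective_iff_isUnit.2 hM, Matrix.mulVec_surjective_iff_isUnit.2 hM⟩ hy, ?_⟩
  refine Set.eq_of_subset_of_ncard_le (fun d hd => ?_) ?_ (Set.toFinite _)
  · change stdConic k (M *ᵥ d.rep) = 0
    simp only [M, k, stdConic_mulVec]
    field_simp
    linear_combination hA.conic_of_isTangent hcard hq ha hb hc hd hab hac hbc hta htc
  · rw [Set.ncard_coe_finset, hcard]
    exact ncard_stdConic_comp_le hk (Matrix.mulVec_injective_iff_isUnit.2 hM)
end
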